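/- arXiv:1404.6357 — 8 statements merged into one kernel-verified Lean document; each statement's English description precedes it below -/
import Mathlib

section
/- Suppose Δ = b² − 4c < 0 and b = 0 (so c ≥ 2), and let D = {0, v, 2v, …, m·v} for an integer m ≥ 1. Then the self-affine set T(A, D) is connected if and only if m ≥ c − 1. -/
open Matrix Polynomial

section StmtSixAux

open EMetric Set

private lemma stmt6_lipschitz_infEdist_image {X : Type*} [EMetricSpace X] {g : X → X} {r : NNReal}
    (hg : LipschitzWith r g) (y : X) (K : Set X) (hK : K.Nonempty) :
    infEdist (g y) (g '' K) ≤ (r : ENNReal) * infEdist y K := by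
  rcases eq_or_ne r 0 with h0 | h0
  · obtain ⟨z, hz⟩ := hK
    refine le_trans (infEdist_le_edist_of_mem (mem_image_of_mem g hz)) ?_
    exact le_trans (hg.edist_le_mul y z) (by simp [h0])
  · have hr : (r : ENNReal) ≠ 0 := by simpa using h0
    calc infEdist (g y) (g '' K) = ⨅ z ∈ K, edist (g y) (g z) := by
          rw [infEdist, Metric.infEDist, iInf_image]
      _ ≤ ⨅ z ∈ K, (r : ENNReal) * edist y z := by
          exact iInf₂_mono fun z _ => hg.edist_le_mul y z
      _ = (r : ENNReal) * infEdist y K := by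
          rw [infEdist, Metric.infEDist]
          simp_rw [ENNReal.mul_iInf_of_ne hr ENNReal.coe_ne_top]

private lemma stmt6_attractor_unique {X : Type*} [MetricSpace X] {ι : Type*}
    (g : ι → X → X) (r : NNReal) (hr : r < 1) (hg : ∀ i, LipschitzWith r (g i))
    (K₁ K₂ : Set X) (h1 : K₁.Nonempty) (h2 : K₂.Nonempty)
    (hc1 : IsCompact K₁) (hc2 : IsCompact K₂)
    (e1 : K₁ = ⋃ i, g i '' K₁) (e2 : K₂ = ⋃ i, g i '' K₂) : K₁ = K₂ := by
  set d := hausdorffEdist K₁ K₂ with hd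
  have hne : d ≠ ⊤ :=
    Metric.hausdorffEdist_ne_top_of_nonempty_of_bounded h1 h2 hc1.isBounded hc2.isBounded
  have key : d ≤ (r : ENNReal) * d := by
    refine hausdorffEdist_le_of_infEdist ?_ ?_
    · intro x hx
      rw [e1] at hx
      obtain ⟨i, y, hy, rfl⟩ := by simpa using hx
      calc infEdist (g i y) K₂ ≤ infEdist (g i y) (g i '' K₂) := by
            refine infEdist_anti ?_
            nth_rewrite 2 [e2]; exact subset_iUnion (fun j => g j '' K₂) i
        _ ≤ (r : ENNReal) * infEdist y K₂ := stmt6_lipschitz_infEdist_image (hg i) y K₂ h2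
        _ ≤ (r : ENNReal) * d := by gcongr; exact infEdist_le_hausdorffEdist_of_mem hy
    · intro x hx
      rw [e2] at hx
      obtain ⟨i, y, hy, rfl⟩ := by simpa using hx
      calc infEdist (g i y) K₁ ≤ infEdist (g i y) (g i '' K₁) := by
            refine infEdist_anti ?_
            nth_rewrite 2 [e1]; exact subset_iUnion (fun j => g j '' K₁) i
        _ ≤ (r : ENNReal) * infEdist y K₁ := stmt6_lipschitz_infEdist_image (hg i) y K₁ h1
        _ ≤ (r : ENNReal) * d := by
            gcongr
            rw [hd, show hausdorffEdist K₁ K₂ = Metric.hausdorffEDist K₂ K₁ from Metric.hausdorffEDist_comm]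
            exact infEdist_le_hausdorffEdist_of_mem hy
  have hd0 : d = 0 := by
    by_contra h
    have hlt : (r : ENNReal) * d < 1 * d :=
      (ENNReal.mul_lt_mul_iff_left h hne).mpr (by exact_mod_cast hr)
    rw [one_mul] at hlt
    exact absurd key (not_le.mpr hlt)
  exact EMetric.hausdorffEdist_zero_iff_eq_of_closed hc1.isClosed hc2.isClosed |>.mp hd0

private lemma stmt6_icc_mem_iff (c : ℝ) (hc : 2 ≤ c) (m : ℕ) (hm1 : 1 ≤ m) (hm : c - 1 ≤ (m:ℝ))
    {p q : ℝ} (hp : p = -(c*m)/(c^2-1)) (hq : q = m/(c^2-1)) (x : ℝ) :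
    x ∈ Set.Icc p q ↔ ∃ k : ℕ, k ≤ m ∧ ∃ t ∈ Set.Icc p q, x = (-t - (k:ℝ))/c := by
  have hc0 : (0:ℝ) < c := by linarith
  have hc1 : (0:ℝ) < c^2 - 1 := by nlinarith
  have hm0 : (1:ℝ) ≤ (m:ℝ) := by exact_mod_cast hm1
  have hqc : c * q = -p := by rw [hp, hq]; field_simp
  have hq2 : q * (c^2 - 1) = (m:ℝ) := by rw [hq]; field_simp
  have hpc : c * p = -(m:ℝ) - q := by nlinarith [hqc, hq2]
  have hqp : q - p ≥ 1 := by nlinarith [hqc, hq2]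
  constructor
  · rintro ⟨hx1, hx2⟩
    set k0 : ℤ := ⌈-(c*x) - q⌉ with hk0
    refine ⟨(max k0 0).toNat, ?_, -(c*x) - ((max k0 0).toNat : ℝ), ⟨?_, ?_⟩, ?_⟩
    · have h1 : k0 ≤ (m:ℤ) := by
        rw [hk0, Int.ceil_le]
        push_cast
        nlinarith
      omega
    · have hkr : ((max k0 0).toNat : ℝ) ≤ -(c*x) - p := by
        rcases le_or_gt k0 0 with h | h
        · have he : (max k0 0).toNat = 0 := by omega
          rw [he]
          push_cast
          nlinarith
        · have he : ((max k0 0).toNat : ℤ) = k0 := by omega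
          have he' : ((max k0 0).toNat : ℝ) = (k0 : ℝ) := by
            exact_mod_cast congrArg (Int.cast : ℤ → ℝ) he
          rw [he']
          have h2 := Int.ceil_lt_add_one (-(c*x) - q)
          rw [← hk0] at h2
          linarith
      linarith
    · have hkr : -(c*x) - q ≤ ((max k0 0).toNat : ℝ) := by
        have h1 : (k0 : ℝ) ≤ ((max k0 0).toNat : ℝ) := by
          have : k0 ≤ ((max k0 0).toNat : ℤ) := by omega
          exact_mod_cast this
        have h2 := Int.le_ceil (-(c*x) - q)
        rw [← hk0] at h2
        linarith
      linarith
    · rw [eq_div_iff hc0.ne']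
      ring
  · rintro ⟨k, hk, t, ⟨ht1, ht2⟩, rfl⟩
    have hkr : (k:ℝ) ≤ (m:ℝ) := by exact_mod_cast hk
    have hk0 : (0:ℝ) ≤ (k:ℝ) := Nat.cast_nonneg k
    constructor
    · rw [le_div_iff₀ hc0]
      nlinarith
    · rw [div_le_iff₀ hc0]
      nlinarith

end StmtSixAux

set_option maxHeartbeats 1000000 in
/-- With `Δ < 0`, `b = 0`, and `D = {0, v, …, m·v}` (`m ≥ 1`):
`T(A, D)` is connected iff `m ≥ c - 1`. -/
theorem stmt6 (A : Matrix (Fin 2) (Fin 2) ℤ) (b c : ℤ)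
    (hchar : A.charpoly = X ^ 2 + C b * X + C c)
    (hexp : ∀ z : ℂ, (A.charpoly.map (Int.castRingHom ℂ)).IsRoot z → 1 < ‖z‖)
    (hΔ : b ^ 2 - 4 * c < 0) (hb : b = 0)
    (v : Fin 2 → ℝ)
    (hv : LinearIndependent ℝ ![v, (A.map (Int.cast : ℤ → ℝ)) *ᵥ v])
    (m : ℕ) (hm : 1 ≤ m)
    (D : Set (Fin 2 → ℝ)) (hD : D = {d | ∃ k : ℕ, k ≤ m ∧ d = (k : ℝ) • v})
    (T : Set (Fin 2 → ℝ)) (hTne : T.Nonempty) (hTcomp : IsCompact T)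
    (hT : T = ⋃ d ∈ D, (fun x => (A.map (Int.cast : ℤ → ℝ))⁻¹ *ᵥ (x + d)) '' T) :
    IsConnected T ↔ c - 1 ≤ (m : ℤ) := by
  -- ## Step 1 : `c ≥ 2` and Cayley–Hamilton
  subst hb
  have hc0' : 0 < c := by nlinarith
  have hc : 2 ≤ c := by
    by_contra h
    have hc1 : c = 1 := by omega
    have hroot : (A.charpoly.map (Int.castRingHom ℂ)).IsRoot Complex.I := by
      rw [hchar, hc1]
      simp [Polynomial.IsRoot, Complex.I_sq]
    have := hexp _ hroot
    simp at this
  have hA2 : A * A = -(c • (1 : Matrix (Fin 2) (Fin 2) ℤ)) := by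
    have hC := Matrix.aeval_self_charpoly A
    rw [hchar] at hC
    simp only [map_add, _root_.map_mul, aeval_X_pow, aeval_C, aeval_X, map_zero] at hC
    have h1 : A ^ 2 + algebraMap ℤ (Matrix (Fin 2) (Fin 2) ℤ) c = 0 := by
      simpa using hC
    have h2 : algebraMap ℤ (Matrix (Fin 2) (Fin 2) ℤ) c = c • 1 := by
      simp [Algebra.algebraMap_eq_smul_one]
    rw [h2] at h1
    rw [← sq]
    linear_combination (norm := abel) h1
  -- ## Step 2 : matrix facts over ℝ
  set M : Matrix (Fin 2) (Fin 2) ℝ := A.map (Int.cast : ℤ → ℝ) with hM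
  have hcR : (2:ℝ) ≤ (c:ℝ) := by exact_mod_cast hc
  have hc0 : (c:ℝ) ≠ 0 := by linarith
  have hcpos : (0:ℝ) < (c:ℝ) := by linarith
  have hM2 : M * M = (-(c:ℝ)) • 1 := by
    have h : M = A.map ⇑(Int.castRingHom ℝ) := rfl
    rw [h, ← Matrix.map_mul, hA2]
    ext i j
    by_cases hij : i = j <;>
      simp [Matrix.map_apply, Matrix.one_apply, Matrix.smul_apply,
        ← Matrix.diagonal_intCast (α := ℤ), Matrix.diagonal_apply, hij]
  have hMinv : M⁻¹ = (-(1:ℝ)/c) • M := by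
    apply Matrix.inv_eq_right_inv
    have h1 : (-1/(c:ℝ)) * (-(c:ℝ)) = 1 := by field_simp
    rw [Matrix.mul_smul, hM2, smul_smul, h1, one_smul]
  have hMinv_mulVec : ∀ x : Fin 2 → ℝ, M⁻¹ *ᵥ x = (-(1:ℝ)/c) • (M *ᵥ x) := by
    intro x
    rw [hMinv, Matrix.smul_mulVec]
  have hMMv : ∀ x : Fin 2 → ℝ, M *ᵥ (M *ᵥ x) = (-(c:ℝ)) • x := by
    intro x
    rw [Matrix.mulVec_mulVec, hM2, Matrix.smul_mulVec, Matrix.one_mulVec]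
  set w : Fin 2 → ℝ := M *ᵥ v with hw
  -- ## Step 3 : basis and coordinates
  have hcard : Fintype.card (Fin 2) = Module.finrank ℝ (Fin 2 → ℝ) := by simp
  set B : Module.Basis (Fin 2) ℝ (Fin 2 → ℝ) := basisOfLinearIndependentOfCardEqFinrank hv hcard with hB
  have hB0 : B 0 = v := by rw [hB, coe_basisOfLinearIndependentOfCardEqFinrank]; rfl
  have hB1 : B 1 = w := by rw [hB, coe_basisOfLinearIndependentOfCardEqFinrank]; rfl
  have hrepr : ∀ α β : ℝ, B.repr (α • v + β • w) = Finsupp.single 0 α + Finsupp.single 1 β := by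
    intro α β
    rw [← hB1, ← hB0]
    rw [map_add, _root_.map_smul, _root_.map_smul, B.repr_self, B.repr_self]
    ext i
    simp [Finsupp.single_apply]
  have hrepr0 : ∀ α β : ℝ, B.repr (α • v + β • w) 0 = α := by
    intro α β; rw [hrepr]; simp [Finsupp.single_apply]
  have hrepr1 : ∀ α β : ℝ, B.repr (α • v + β • w) 1 = β := by
    intro α β; rw [hrepr]; simp [Finsupp.single_apply]
  have hexpand : ∀ x : Fin 2 → ℝ, x = (B.repr x 0) • v + (B.repr x 1) • w := by
    intro x
    conv_lhs => rw [← B.sum_repr x]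
    rw [Fin.sum_univ_two, hB0, hB1]
  -- ## Step 4 : the one-step map in coordinates
  have hfk : ∀ (α β : ℝ) (k : ℕ),
      M⁻¹ *ᵥ ((α • v + β • w) + (k:ℝ) • v) = β • v + ((-α - k)/c) • w := by
    intro α β k
    have h : M *ᵥ ((α • v + β • w) + (k:ℝ) • v) = (α + k) • w + β • ((-(c:ℝ)) • v) := by
      rw [Matrix.mulVec_add, Matrix.mulVec_add, Matrix.mulVec_smul, Matrix.mulVec_smul,
        Matrix.mulVec_smul, ← hw, hw, hMMv]
      module
    rw [hMinv_mulVec, h]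
    match_scalars <;> (field_simp; try ring)
  set φ : (Fin 2 → ℝ) → ℝ := fun x => B.repr x 0 with hφ
  set ψ : (Fin 2 → ℝ) → ℝ := fun x => B.repr x 1 with hψ
  have hφcont : Continuous φ := by
    exact (B.coord 0).continuous_of_finiteDimensional
  have hfkφ : ∀ (x : Fin 2 → ℝ) (k : ℕ), φ (M⁻¹ *ᵥ (x + (k:ℝ) • v)) = ψ x := by
    intro x k
    have h := hfk (B.repr x 0) (B.repr x 1) k
    rw [← hexpand x] at h
    rw [hφ, hψ]
    simp only
    rw [h, hrepr0]
  have hfkψ : ∀ (x : Fin 2 → ℝ) (k : ℕ), ψ (M⁻¹ *ᵥ (x + (k:ℝ) • v)) = (-(φ x) - k)/c := by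
    intro x k
    have h := hfk (B.repr x 0) (B.repr x 1) k
    rw [← hexpand x] at h
    rw [hφ, hψ]
    simp only
    rw [h, hrepr1]
  -- ## Step 5 : membership characterization of T
  have hTmem : ∀ x, x ∈ T ↔ ∃ k : ℕ, k ≤ m ∧ ∃ y ∈ T, x = M⁻¹ *ᵥ (y + (k:ℝ) • v) := by
    intro x
    conv_lhs => rw [hT]
    simp only [hD, Set.mem_iUnion, Set.mem_image, Set.mem_setOf_eq, exists_prop]
    constructor
    · rintro ⟨d, ⟨k, hk, rfl⟩, y, hy, rfl⟩
      exact ⟨k, hk, y, hy, rfl⟩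
    · rintro ⟨k, hk, y, hy, rfl⟩
      exact ⟨(k:ℝ) • v, ⟨k, hk, rfl⟩, y, hy, rfl⟩
  -- ## Step 6 : the projected set P and its structure
  set P : Set ℝ := φ '' T with hP
  have hPne : P.Nonempty := hTne.image φ
  have hPcomp : IsCompact P := hTcomp.image hφcont
  have hPψ : ψ '' T = P := by
    apply Set.Subset.antisymm
    · rintro - ⟨y, hy, rfl⟩
      have hx : M⁻¹ *ᵥ (y + ((0:ℕ):ℝ) • v) ∈ T := (hTmem _).mpr ⟨0, Nat.zero_le m, y, hy, rfl⟩
      exact ⟨_, hx, hfkφ y 0⟩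
    · rintro - ⟨x, hx, rfl⟩
      obtain ⟨k, hk, y, hy, rfl⟩ := (hTmem x).mp hx
      exact ⟨y, hy, (hfkφ y k).symm⟩
  have hPmem : ∀ s : ℝ, s ∈ P ↔ ∃ k : ℕ, k ≤ m ∧ ∃ t ∈ P, s = (-t - k)/c := by
    intro s
    constructor
    · intro hs
      rw [← hPψ] at hs
      obtain ⟨x, hx, rfl⟩ := hs
      obtain ⟨k, hk, y, hy, rfl⟩ := (hTmem x).mp hx
      exact ⟨k, hk, φ y, ⟨y, hy, rfl⟩, (hfkψ y k)⟩
    · rintro ⟨k, hk, t, ⟨y, hy, rfl⟩, rfl⟩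
      have hx : M⁻¹ *ᵥ (y + (k:ℝ) • v) ∈ T := (hTmem _).mpr ⟨k, hk, y, hy, rfl⟩
      rw [← hPψ]
      exact ⟨_, hx, hfkψ y k⟩
  set i : ℝ := sInf P with hi
  set s : ℝ := sSup P with hs
  have hiP : i ∈ P := hPcomp.sInf_mem hPne
  have hsP : s ∈ P := hPcomp.sSup_mem hPne
  have hbddB : BddBelow P := hPcomp.bddBelow
  have hbddA : BddAbove P := hPcomp.bddAbove
  have hle : ∀ t ∈ P, i ≤ t ∧ t ≤ s := fun t ht => ⟨csInf_le hbddB ht, le_csSup hbddA ht⟩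
  have hs_eq : s = -i/c := by
    apply IsGreatest.csSup_eq
    constructor
    · exact (hPmem (-i/c)).mpr ⟨0, Nat.zero_le m, i, hiP, by push_cast; ring⟩
    · rintro t ht
      obtain ⟨k, hk, u, hu, rfl⟩ := (hPmem t).mp ht
      have h1 : i ≤ u := (hle u hu).1
      have h2 : (0:ℝ) ≤ (k:ℝ) := Nat.cast_nonneg k
      rw [div_le_div_iff_of_pos_right hcpos]
      linarith
  have hi_eq : i = (-s - m)/c := by
    apply IsLeast.csInf_eq
    constructor
    · exact (hPmem ((-s - m)/c)).mpr ⟨m, le_refl m, s, hsP, rfl⟩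
    · rintro t ht
      obtain ⟨k, hk, u, hu, rfl⟩ := (hPmem t).mp ht
      have h1 : u ≤ s := (hle u hu).2
      have h2 : (k:ℝ) ≤ (m:ℝ) := by exact_mod_cast hk
      rw [div_le_div_iff_of_pos_right hcpos]
      linarith
  have hc1 : (0:ℝ) < (c:ℝ)^2 - 1 := by nlinarith
  have hs_val : s * ((c:ℝ)^2 - 1) = (m:ℝ) := by
    have h1 : (c:ℝ) * s = -i := by rw [hs_eq]; field_simp
    have h2 : (c:ℝ) * i = -s - m := by rw [hi_eq]; field_simp
    nlinarith [h1, h2]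
  have hi_val : i * ((c:ℝ)^2 - 1) = -((c:ℝ) * m) := by
    have h1 : (c:ℝ) * s = -i := by rw [hs_eq]; field_simp
    nlinarith [h1, hs_val]
  have hm1R : (1:ℝ) ≤ (m:ℝ) := by exact_mod_cast hm
  -- ## Step 7 : forward direction
  have forward : IsConnected T → ¬ ((m:ℝ) ≤ (c:ℝ) - 2) := by
    intro hconn hmr
    have hPconn : IsConnected P := hconn.image φ hφcont.continuousOn
    have hIcc : Set.Icc i s ⊆ P :=
      hPconn.isPreconnected.Icc_subset hiP hsP
    have hs0 : 0 ≤ s := by nlinarith [hs_val, hc1, hm1R]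
    have hsi1 : s - i < 1 := by nlinarith [hs_val, hi_val]
    set t0 : ℝ := ((-(i+1)) + (-s))/(2*c) with ht0
    have h2c : (0:ℝ) < 2*(c:ℝ) := by linarith
    have hgap1 : -(i+1)/c < t0 := by
      rw [ht0, div_lt_div_iff₀ hcpos h2c]
      nlinarith
    have hgap2 : t0 < -s/c := by
      rw [ht0, div_lt_div_iff₀ h2c hcpos]
      nlinarith
    have hi_t0 : i ≤ t0 := by
      have h1 : i ≤ -(i+1)/c := by
        rw [le_div_iff₀ hcpos]
        nlinarith [hi_val, hm1R]
      linarith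
    have ht0_s : t0 ≤ s := by
      have h1 : -s/c ≤ s := by
        rw [div_le_iff₀ hcpos]
        nlinarith
      linarith
    have ht0P : t0 ∈ P := hIcc ⟨hi_t0, ht0_s⟩
    obtain ⟨k, hk, u, hu, hrel⟩ := (hPmem t0).mp ht0P
    have hui : i ≤ u := (hle u hu).1
    have hus : u ≤ s := (hle u hu).2
    rcases Nat.eq_zero_or_pos k with hk0 | hk1
    · subst hk0
      rw [hrel] at hgap2
      rw [div_lt_div_iff_of_pos_right hcpos] at hgap2
      push_cast at hgap2
      linarith
    · have hk1R : (1:ℝ) ≤ (k:ℝ) := by exact_mod_cast hk1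
      rw [hrel] at hgap1
      rw [div_lt_div_iff_of_pos_right hcpos] at hgap1
      linarith
  -- ## Step 8 : backward direction
  have backward : (c:ℝ) - 1 ≤ (m:ℝ) → IsConnected T := by
    intro hmc
    set p : ℝ := -((c:ℝ)*m)/((c:ℝ)^2-1) with hp
    set q : ℝ := (m:ℝ)/((c:ℝ)^2-1) with hq
    have hmem := fun x => stmt6_icc_mem_iff (c:ℝ) hcR m hm hmc hp hq x
    have hpq : p ≤ q := by
      rw [hp, hq, div_le_div_iff_of_pos_right hc1]
      nlinarith
    set L : ℝ × ℝ → (Fin 2 → ℝ) := fun pr => pr.1 • v + pr.2 • w with hL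
    have hLcont : Continuous L := by fun_prop
    set F : Set (Fin 2 → ℝ) := L '' (Set.Icc p q ×ˢ Set.Icc p q) with hF
    have hFne : F.Nonempty :=
      ((Set.nonempty_Icc.mpr hpq).prod (Set.nonempty_Icc.mpr hpq)).image L
    have hFcomp : IsCompact F := (isCompact_Icc.prod isCompact_Icc).image hLcont
    have hFconn : IsConnected F :=
      ((isConnected_Icc hpq).prod (isConnected_Icc hpq)).image L hLcont.continuousOn
    have hFeq : ∀ x, x ∈ F ↔ ∃ k : ℕ, k ≤ m ∧ ∃ y ∈ F, x = M⁻¹ *ᵥ (y + (k:ℝ) • v) := by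
      intro x
      constructor
      · rintro ⟨⟨α, β⟩, ⟨hα, hβ⟩, rfl⟩
        obtain ⟨k, hk, t, ht, hβt⟩ := (hmem β).mp hβ
        refine ⟨k, hk, L (t, α), ⟨(t, α), ⟨ht, hα⟩, rfl⟩, ?_⟩
        rw [hL]
        simp only
        rw [hfk t α k, ← hβt]
      · rintro ⟨k, hk, y, ⟨⟨α, β⟩, ⟨hα, hβ⟩, rfl⟩, rfl⟩
        rw [hL]
        simp only
        rw [hfk α β k]
        exact ⟨(β, (-α - k)/c), ⟨hβ, (hmem _).mpr ⟨k, hk, α, hα, rfl⟩⟩, rfl⟩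
    -- the doubled IFS
    set g : Fin (m+1) × Fin (m+1) → (Fin 2 → ℝ) → (Fin 2 → ℝ) :=
      fun kk x => M⁻¹ *ᵥ ((M⁻¹ *ᵥ (x + ((kk.2 : ℕ):ℝ) • v)) + ((kk.1 : ℕ):ℝ) • v) with hg
    have hMinv2 : ∀ x : Fin 2 → ℝ, M⁻¹ *ᵥ (M⁻¹ *ᵥ x) = (-(1:ℝ)/c) • x := by
      intro x
      rw [hMinv_mulVec, hMinv_mulVec, Matrix.mulVec_smul, hMMv, smul_smul, smul_smul]
      match_scalars
      field_simp
    have hg_sub : ∀ kk (x y : Fin 2 → ℝ), g kk x - g kk y = (-(1:ℝ)/c) • (x - y) := by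
      intro kk x y
      rw [hg]
      simp only
      rw [← Matrix.mulVec_sub, add_sub_add_right_eq_sub, ← Matrix.mulVec_sub,
        add_sub_add_right_eq_sub, hMinv2]
    set r : NNReal := ⟨1/(c:ℝ), by positivity⟩ with hr
    have hrlt : r < 1 := by
      rw [← NNReal.coe_lt_coe, hr]
      show 1/(c:ℝ) < 1
      rw [div_lt_one hcpos]
      linarith
    have hglip : ∀ kk, LipschitzWith r (g kk) := by
      intro kk
      apply LipschitzWith.of_dist_le_mul
      intro x y
      rw [dist_eq_norm, hg_sub kk x y, norm_smul]
      rw [dist_eq_norm]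
      apply le_of_eq
      congr 1
      rw [hr]
      show ‖(-(1:ℝ)/c)‖ = 1/(c:ℝ)
      rw [Real.norm_eq_abs, abs_div, abs_neg, abs_one, abs_of_pos hcpos]
    have hdouble : ∀ S : Set (Fin 2 → ℝ),
        (∀ x, x ∈ S ↔ ∃ k : ℕ, k ≤ m ∧ ∃ y ∈ S, x = M⁻¹ *ᵥ (y + (k:ℝ) • v)) →
        S = ⋃ kk : Fin (m+1) × Fin (m+1), g kk '' S := by
      intro S hSmem
      ext x
      simp only [Set.mem_iUnion, Set.mem_image]
      constructor
      · intro hx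
        obtain ⟨k, hk, y, hy, rfl⟩ := (hSmem x).mp hx
        obtain ⟨k', hk', z, hz, rfl⟩ := (hSmem y).mp hy
        refine ⟨(⟨k, by omega⟩, ⟨k', by omega⟩), z, hz, ?_⟩
        rw [hg]
      · rintro ⟨kk, z, hz, rfl⟩
        have h1 : M⁻¹ *ᵥ (z + ((kk.2 : ℕ):ℝ) • v) ∈ S :=
          (hSmem _).mpr ⟨kk.2, by omega, z, hz, rfl⟩
        exact (hSmem _).mpr ⟨kk.1, by omega, _, h1, rfl⟩
    have hTF : T = F :=
      stmt6_attractor_unique g r hrlt hglip T F hTne hFne hTcomp hFcomp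
        (hdouble T hTmem) (hdouble F hFeq)
    rw [hTF]
    exact hFconn
  -- ## Conclusion
  constructor
  · intro hconn
    by_contra h
    push_neg at h
    have h2 : (m:ℤ) ≤ c - 2 := by omega
    have h3 : (m:ℝ) ≤ (c:ℝ) - 2 := by exact_mod_cast h2
    exact forward hconn h3
  · intro hmc
    apply backward
    exact_mod_cast (by omega : c - 1 ≤ (m:ℤ))
end

section
/- Let D = {0, v, 2v, …, m·v} for an integer m ≥ 1. Then the self-affine set T(A, D) is connected if and only if the self-affine set T(−A, D) is connected. (The matrix −A is expanding with characteristic polynomial x² − b x + c, and v, (−A)v are linearly independent.) -/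
open Matrix Polynomial Filter Topology

/-- If `u (n+1) = μ * u n + w n` with `‖μ‖ < 1` and `w → 0`, then `u → 0`. -/
lemma aux_L (μ : ℂ) (hμ : ‖μ‖ < 1) (u w : ℕ → ℂ)
    (hw : Tendsto w atTop (𝓝 0))
    (hrec : ∀ n, u (n + 1) = μ * u n + w n) :
    Tendsto u atTop (𝓝 0) := by
  rw [NormedAddCommGroup.tendsto_nhds_zero]
  intro ε hε
  obtain ⟨q, hq0, hq1, hμq⟩ : ∃ q : ℝ, 0 ≤ q ∧ q < 1 ∧ ‖μ‖ ≤ q :=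
    ⟨‖μ‖, norm_nonneg μ, hμ, le_refl _⟩
  have h1a : 0 < 1 - q := by linarith
  set δ : ℝ := ε * (1 - q) / 2 with hδdef
  have hδ : 0 < δ := by positivity
  obtain ⟨N, hN⟩ := (Metric.tendsto_atTop.mp hw) δ hδ
  have hNw : ∀ n ≥ N, ‖w n‖ ≤ δ := by
    intro n hn
    have := hN n hn
    rw [dist_zero_right] at this
    exact this.le
  have hbound : ∀ k : ℕ, ‖u (N + k)‖ ≤ q ^ k * ‖u N‖ + δ / (1 - q) := by
    intro k
    induction k with
    | zero => simp; positivity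
    | succ k ih =>
      have h1 : ‖u (N + (k+1))‖ ≤ q * ‖u (N + k)‖ + δ := by
        have he : u (N + (k+1)) = μ * u (N + k) + w (N + k) := by
          have := hrec (N + k); rw [← this]; ring_nf
        rw [he]
        calc ‖μ * u (N+k) + w (N+k)‖ ≤ ‖μ * u (N+k)‖ + ‖w (N+k)‖ := norm_add_le _ _
          _ ≤ q * ‖u (N+k)‖ + δ := by
              rw [norm_mul]
              have h2 := hNw (N + k) (Nat.le_add_right _ _)
              have h3 : ‖μ‖ * ‖u (N+k)‖ ≤ q * ‖u (N+k)‖ :=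
                mul_le_mul_of_nonneg_right hμq (norm_nonneg _)
              linarith
      have hun : 0 ≤ ‖u N‖ := norm_nonneg _
      have hqk : (0:ℝ) ≤ q ^ k := pow_nonneg hq0 k
      calc ‖u (N + (k+1))‖ ≤ q * ‖u (N + k)‖ + δ := h1
        _ ≤ q * (q ^ k * ‖u N‖ + δ / (1 - q)) + δ := by nlinarith
        _ = q ^ (k+1) * ‖u N‖ + (q * (δ / (1 - q)) + δ) := by ring
        _ = q ^ (k+1) * ‖u N‖ + δ / (1 - q) := by
            congr 1
            field_simp
            ring
  have hgeo : Tendsto (fun k : ℕ => q ^ k * ‖u N‖) atTop (𝓝 0) := by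
    have := (tendsto_pow_atTop_nhds_zero_of_lt_one hq0 hq1).mul_const ‖u N‖
    simpa using this
  obtain ⟨K, hK⟩ := (Metric.tendsto_atTop.mp hgeo) (δ/2) (by positivity)
  filter_upwards [eventually_ge_atTop (N + K)] with n hn
  have hkn : N + (n - N) = n := by omega
  have hb := hbound (n - N)
  rw [hkn] at hb
  have hKk := hK (n - N) (by omega)
  rw [dist_zero_right, Real.norm_eq_abs] at hKk
  have habs : q ^ (n - N) * ‖u N‖ ≤ δ/2 := (le_abs_self _).trans hKk.le
  have hδle : δ / (1 - q) ≤ ε / 2 := by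
    rw [div_le_div_iff₀ h1a (by norm_num : (0:ℝ) < 2), hδdef]
    ring_nf
    nlinarith
  calc ‖u n‖ ≤ q ^ (n-N) * ‖u N‖ + δ / (1 - q) := hb
    _ ≤ δ/2 + ε/2 := by linarith
    _ < ε := by
        have : δ < ε := by rw [hδdef]; nlinarith
        linarith

/-- Solutions of a second-order linear recurrence whose characteristic roots
have modulus `< 1` tend to zero. -/
lemma aux_L2 (μ₁ μ₂ : ℂ) (hμ₁ : ‖μ₁‖ < 1) (hμ₂ : ‖μ₂‖ < 1) (u : ℕ → ℂ)
    (hrec : ∀ n, u (n + 2) = (μ₁ + μ₂) * u (n + 1) - μ₁ * μ₂ * u n) :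
    Tendsto u atTop (𝓝 0) := by
  set w : ℕ → ℂ := fun n => u (n + 1) - μ₁ * u n with hw
  have hwrec : ∀ n, w (n + 1) = μ₂ * w n := by
    intro n
    simp only [hw]
    have := hrec n
    ring_nf
    ring_nf at this
    linear_combination this
  have hwgeo : ∀ n, w n = μ₂ ^ n * w 0 := by
    intro n
    induction n with
    | zero => simp
    | succ n ih => rw [hwrec n, ih]; ring
  have hw0 : Tendsto w atTop (𝓝 0) := by
    have h := (tendsto_pow_atTop_nhds_zero_of_norm_lt_one hμ₂).mul_const (w 0)
    rw [zero_mul] at h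
    exact h.congr fun n => (hwgeo n).symm
  exact aux_L μ₁ hμ₁ u w hw0 fun n => by simp only [hw]; ring

/-- Powers of a real 2×2 matrix whose characteristic roots have modulus < 1
tend to zero entrywise. -/
lemma aux_pow (M : Matrix (Fin 2) (Fin 2) ℝ) (β γ : ℝ) (μ₁ μ₂ : ℂ)
    (hμ₁ : ‖μ₁‖ < 1) (hμ₂ : ‖μ₂‖ < 1)
    (hs : (β : ℂ) = μ₁ + μ₂) (hp : (γ : ℂ) = μ₁ * μ₂)
    (hM2 : M ^ 2 = β • M - γ • (1 : Matrix (Fin 2) (Fin 2) ℝ)) :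
    ∀ i j, Tendsto (fun n => (M ^ n) i j) atTop (𝓝 0) := by
  have hMrec : ∀ n, M ^ (n + 2) = β • M ^ (n + 1) - γ • M ^ n := by
    intro n
    have : M ^ (n + 2) = M ^ n * M ^ 2 := pow_add M n 2
    rw [this, hM2, Matrix.mul_sub, Matrix.mul_smul, Matrix.mul_smul, mul_one,
      ← pow_succ]
  intro i j
  set u : ℕ → ℂ := fun n => ((M ^ n) i j : ℂ) with hu
  have hurec : ∀ n, u (n + 2) = (μ₁ + μ₂) * u (n + 1) - μ₁ * μ₂ * u n := by
    intro n
    simp only [hu]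
    have h := hMrec n
    have h2 : (M ^ (n+2)) i j = β * (M ^ (n+1)) i j - γ * (M ^ n) i j := by
      rw [h]; simp [Matrix.sub_apply, Matrix.smul_apply, smul_eq_mul]
    rw [← hs, ← hp]
    push_cast [h2]
    ring
  have hu0 : Tendsto u atTop (𝓝 0) := aux_L2 μ₁ μ₂ hμ₁ hμ₂ u hurec
  have := (Complex.continuous_re.tendsto (0 : ℂ)).comp hu0
  simpa [hu, Function.comp_def] using this

/-- Inclusion of invariant sets for a contracting affine IFS. -/
lemma aux_subset (M : Matrix (Fin 2) (Fin 2) ℝ)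
    (hpow : ∀ i j, Tendsto (fun n => (M ^ n) i j) atTop (𝓝 0))
    (Dig : Set (Fin 2 → ℝ)) (X Y : Set (Fin 2 → ℝ))
    (hXb : Bornology.IsBounded X) (hYb : Bornology.IsBounded Y)
    (hYne : Y.Nonempty) (hYc : IsClosed Y)
    (hX : ∀ x ∈ X, ∃ d ∈ Dig, ∃ q ∈ X, x = M *ᵥ (q + d))
    (hY : ∀ d ∈ Dig, ∀ y ∈ Y, M *ᵥ (y + d) ∈ Y) : X ⊆ Y := by
  obtain ⟨z0, hz0⟩ := hYne
  obtain ⟨R, hR⟩ := isBounded_iff_forall_norm_le.mp (hXb.union hYb)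
  have main : ∀ n : ℕ, ∀ p ∈ X, ∃ y ∈ Y, ∃ q ∈ X, ∃ z ∈ Y,
      p - y = (M ^ n) *ᵥ (q - z) := by
    intro n
    induction n with
    | zero =>
      intro p hp
      exact ⟨z0, hz0, p, hp, z0, hz0, by rw [pow_zero, Matrix.one_mulVec]⟩
    | succ n ih =>
      intro p hp
      obtain ⟨d, hd, q, hq, hpq⟩ := hX p hp
      obtain ⟨y, hy, q', hq', z, hz, hqy⟩ := ih q hq
      refine ⟨M *ᵥ (y + d), hY d hd y hy, q', hq', z, hz, ?_⟩
      rw [hpq, ← Matrix.mulVec_sub]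
      have : q + d - (y + d) = q - y := by ring
      rw [this, hqy, Matrix.mulVec_mulVec, ← pow_succ']
  intro p hp
  have H : ∀ n : ℕ, ∃ y ∈ Y, ∃ q ∈ X, ∃ z ∈ Y, p - y = (M ^ n) *ᵥ (q - z) :=
    fun n => main n p hp
  choose y hy q hq z hz hEq using H
  have hrb : ∀ n, ∀ j, ‖(q n - z n) j‖ ≤ 2 * R := by
    intro n j
    have h1 : ‖q n - z n‖ ≤ 2 * R := by
      have := norm_sub_le (q n) (z n)
      have hqn := hR (q n) (Set.mem_union_left _ (hq n))
      have hzn := hR (z n) (Set.mem_union_right _ (hz n))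
      linarith
    exact (norm_le_pi_norm _ j).trans h1
  have hto : Tendsto (fun n => p - y n) atTop (𝓝 0) := by
    have : Tendsto (fun n => (M ^ n) *ᵥ (q n - z n)) atTop (𝓝 0) := by
      rw [tendsto_pi_nhds]
      intro i
      have hsum : ∀ n, ((M ^ n) *ᵥ (q n - z n)) i
          = ∑ j : Fin 2, (M ^ n) i j * (q n - z n) j := by
        intro n; rfl
      have : Tendsto (fun n => ∑ j : Fin 2, (M ^ n) i j * (q n - z n) j)
          atTop (𝓝 0) := by
        have h0 : (0 : ℝ) = ∑ j : Fin 2, 0 := by simp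
        rw [h0]
        refine tendsto_finset_sum _ fun j _ => ?_
        refine squeeze_zero_norm (a := fun n => ‖(M ^ n) i j‖ * (2 * R)) ?_ ?_
        · intro n
          rw [norm_mul]
          refine mul_le_mul_of_nonneg_left (hrb n j) (norm_nonneg _)
        · have := ((hpow i j).norm).mul_const (2 * R)
          simpa using this
      exact this.congr fun n => (hsum n).symm
    refine this.congr fun n => (hEq n).symm
  have hyto : Tendsto y atTop (𝓝 p) := by
    have := (tendsto_const_nhds (x := p) (f := atTop)).sub hto
    simpa using this
  exact hYc.mem_of_tendsto hyto (Filter.Eventually.of_forall hy)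

/-- Let `A` be an expanding `2×2` integer matrix with characteristic
polynomial `x² + bx + c`, `v, Av` linearly independent, and `D = {0, v, …, m·v}` with
`m ≥ 1`.  Then the self-affine set `T₁ = T(A, D)` is connected iff `T₂ = T(-A, D)` is
connected. -/
theorem stmt13 (A : Matrix (Fin 2) (Fin 2) ℤ) (b c : ℤ)
    (hchar : A.charpoly = X ^ 2 + C b * X + C c)
    (hexp : ∀ z : ℂ, (A.charpoly.map (Int.castRingHom ℂ)).IsRoot z → 1 < ‖z‖)
    (v : Fin 2 → ℝ)
    (hv : LinearIndependent ℝ ![v, (A.map (Int.cast : ℤ → ℝ)) *ᵥ v])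
    (m : ℕ) (hm : 1 ≤ m)
    (D : Set (Fin 2 → ℝ)) (hD : D = {d | ∃ k : ℕ, k ≤ m ∧ d = (k : ℝ) • v})
    (T₁ : Set (Fin 2 → ℝ)) (hT₁ne : T₁.Nonempty) (hT₁comp : IsCompact T₁)
    (hT₁ : T₁ = ⋃ d ∈ D, (fun x => (A.map (Int.cast : ℤ → ℝ))⁻¹ *ᵥ (x + d)) '' T₁)
    (T₂ : Set (Fin 2 → ℝ)) (hT₂ne : T₂.Nonempty) (hT₂comp : IsCompact T₂)
    (hT₂ : T₂ = ⋃ d ∈ D, (fun x => (-(A.map (Int.cast : ℤ → ℝ)))⁻¹ *ᵥ (x + d)) '' T₂) :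
    IsConnected T₁ ↔ IsConnected T₂ := by
  set B := A.map (Int.cast : ℤ → ℝ) with hBdef
  -- mapped charpoly over ℂ
  have hpC : A.charpoly.map (Int.castRingHom ℂ)
      = X ^ 2 + C (b:ℂ) * X + C (c:ℂ) := by
    rw [hchar]
    push_cast [Polynomial.map_add, Polynomial.map_mul, Polynomial.map_pow,
      Polynomial.map_X, Polynomial.map_intCast]
    simp
  -- the two complex roots
  obtain ⟨sd, hsd⟩ : ∃ sd : ℂ, sd ^ 2 = (b:ℂ)^2 - 4*c :=
    IsAlgClosed.exists_pow_nat_eq _ (n := 2) (by norm_num)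
  set l₁ : ℂ := (-b + sd)/2 with hl₁
  set l₂ : ℂ := (-b - sd)/2 with hl₂
  have hsum : l₁ + l₂ = -(b:ℂ) := by rw [hl₁, hl₂]; ring
  have hprod : l₁ * l₂ = (c:ℂ) := by rw [hl₁, hl₂]; linear_combination (-1/4 : ℂ) * hsd
  have hroot : ∀ l : ℂ, l^2 + b*l + c = 0 → 1 < ‖l‖ := by
    intro l hl
    apply hexp
    rw [hpC]
    simp [Polynomial.IsRoot, Polynomial.eval_add, Polynomial.eval_mul]
    linear_combination hl
  have h₁ : 1 < ‖l₁‖ := hroot l₁ (by rw [hl₁]; linear_combination (1/4:ℂ)*hsd)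
  have h₂ : 1 < ‖l₂‖ := hroot l₂ (by rw [hl₂]; linear_combination (1/4:ℂ)*hsd)
  have h1ne : l₁ ≠ 0 := by
    intro h; rw [h] at h₁; simp at h₁; linarith
  have h2ne : l₂ ≠ 0 := by
    intro h; rw [h] at h₂; simp at h₂; linarith
  -- nonvanishing of c, 1+b+c, 1-b+c
  have hcC : (c:ℂ) ≠ 0 := hprod ▸ mul_ne_zero h1ne h2ne
  have hc : (c:ℝ) ≠ 0 := by
    intro h
    apply hcC
    have : (c:ℤ) = 0 := by exact_mod_cast h
    rw [this]; simp
  have hone : ∀ l : ℂ, 1 < ‖l‖ → (1:ℂ) - l ≠ 0 := by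
    intro l hl h
    have : l = 1 := by linear_combination -h
    rw [this] at hl; simp at hl
  have honen : ∀ l : ℂ, 1 < ‖l‖ → (1:ℂ) + l ≠ 0 := by
    intro l hl h
    have : l = -1 := by linear_combination h
    rw [this] at hl; simp at hl
  have he1C : (1:ℂ) + b + c ≠ 0 := by
    have : (1:ℂ) + b + c = (1 - l₁) * (1 - l₂) := by
      rw [hl₁, hl₂]
      linear_combination (1/4:ℂ) * hsd
    rw [this]
    exact mul_ne_zero (hone l₁ h₁) (hone l₂ h₂)
  have he2C : (1:ℂ) - b + c ≠ 0 := by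
    have : (1:ℂ) - b + c = (1 + l₁) * (1 + l₂) := by
      rw [hl₁, hl₂]
      linear_combination (1/4:ℂ) * hsd
    rw [this]
    exact mul_ne_zero (honen l₁ h₁) (honen l₂ h₂)
  have he1 : (1:ℝ) + b + c ≠ 0 := by
    intro h
    apply he1C
    have : ((1 + b + c : ℤ) : ℝ) = 0 := by push_cast; linarith
    have h2 : (1 + b + c : ℤ) = 0 := by exact_mod_cast this
    exact_mod_cast h2
  have he2 : (1:ℝ) - b + c ≠ 0 := by
    intro h
    apply he2C
    have : ((1 - b + c : ℤ) : ℝ) = 0 := by push_cast; linarith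
    have h2 : (1 - b + c : ℤ) = 0 := by exact_mod_cast this
    exact_mod_cast h2
  -- Cayley–Hamilton over ℝ
  have hcp : B.charpoly = X ^ 2 + C (b:ℝ) * X + C (c:ℝ) := by
    rw [show B = A.map (Int.castRingHom ℝ) from rfl, Matrix.charpoly_map, hchar]
    simp [Polynomial.map_add, Polynomial.map_mul, Polynomial.map_pow]
  have hCH : B * B + (b:ℝ) • B + (c:ℝ) • 1 = 0 := by
    have h := Matrix.aeval_self_charpoly B
    rw [hcp] at h
    simp only [map_add, _root_.map_mul, map_pow, aeval_X, aeval_C,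
      Algebra.algebraMap_eq_smul_one, smul_one_mul] at h
    rw [← pow_two]
    exact h
  have hBB : B * B = (-(b:ℝ)) • B - (c:ℝ) • 1 := by
    have h' : B * B + ((b:ℝ) • B + (c:ℝ) • 1) = 0 := by rw [← add_assoc]; exact hCH
    have h2 := eq_neg_of_add_eq_zero_left h'
    rw [h2]; module
  -- invertibility of B
  have hBright : B * ((-(c:ℝ)⁻¹) • (B + (b:ℝ) • 1)) = 1 := by
    rw [Matrix.mul_smul, mul_add, Matrix.mul_smul, mul_one, hBB]
    rw [show (-(b:ℝ)) • B - (c:ℝ) • 1 + (b:ℝ) • B = (-(c:ℝ)) • 1 by module]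
    rw [smul_smul]
    rw [show (-(c:ℝ)⁻¹) * (-(c:ℝ)) = (c:ℝ)⁻¹ * c by ring, inv_mul_cancel₀ hc, one_smul]
  have hBleft : ((-(c:ℝ)⁻¹) • (B + (b:ℝ) • 1)) * B = 1 := by
    rw [Matrix.smul_mul, add_mul, Matrix.smul_mul, one_mul, hBB]
    rw [show (-(b:ℝ)) • B - (c:ℝ) • 1 + (b:ℝ) • B = (-(c:ℝ)) • 1 by module]
    rw [smul_smul]
    rw [show (-(c:ℝ)⁻¹) * (-(c:ℝ)) = (c:ℝ)⁻¹ * c by ring, inv_mul_cancel₀ hc, one_smul]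
  have hBunit : IsUnit B := ⟨⟨B, _, hBright, hBleft⟩, rfl⟩
  have hdet : IsUnit B.det := (Matrix.isUnit_iff_isUnit_det B).mp hBunit
  have hBi : B * B⁻¹ = 1 := Matrix.mul_nonsing_inv B hdet
  have hiB : B⁻¹ * B = 1 := Matrix.nonsing_inv_mul B hdet
  set Minv := B⁻¹ with hMinvdef
  have hnegB : (-B)⁻¹ = -Minv := by
    apply Matrix.inv_eq_right_inv
    rw [neg_mul_neg]; exact hBi
  -- Minv quadratic relation
  have e1' : Minv * (B * B) * Minv = 1 := by
    rw [show Minv * (B * B) = (Minv * B) * B from (mul_assoc _ _ _).symm, hiB, one_mul, hBi]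
  rw [hBB] at e1'
  have e2 : (-(b:ℝ)) • Minv - (c:ℝ) • (Minv * Minv) = 1 := by
    rw [← e1']
    rw [Matrix.mul_sub, Matrix.mul_smul, Matrix.mul_smul, mul_one, hiB]
    rw [Matrix.sub_mul, Matrix.smul_mul, Matrix.smul_mul, one_mul]
  have e3 : (c:ℝ) • (Minv * Minv) = (-(b:ℝ)) • Minv - 1 := by
    have e4 := sub_eq_iff_eq_add.mp e2
    rw [e4]; abel
  set βr : ℝ := -((b:ℝ) / (c:ℝ)) with hβr
  set γr : ℝ := (c:ℝ)⁻¹ with hγr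
  have hM2 : Minv ^ 2 = βr • Minv - γr • 1 := by
    rw [pow_two,
      show Minv * Minv = (c:ℝ)⁻¹ • ((c:ℝ) • (Minv * Minv)) by
        rw [smul_smul, inv_mul_cancel₀ hc, one_smul],
      e3, hβr, hγr]
    rw [smul_sub, smul_smul]
    congr 1
    rw [show (c:ℝ)⁻¹ * (-(b:ℝ)) = -((b:ℝ)/(c:ℝ)) by ring]
  -- roots of Minv's recurrence
  set μ₁ : ℂ := l₁⁻¹ with hμ₁def
  set μ₂ : ℂ := l₂⁻¹ with hμ₂def
  have hμ₁ : ‖μ₁‖ < 1 := by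
    rw [hμ₁def, norm_inv]
    exact inv_lt_one_of_one_lt₀ h₁
  have hμ₂ : ‖μ₂‖ < 1 := by
    rw [hμ₂def, norm_inv]
    exact inv_lt_one_of_one_lt₀ h₂
  have hβμ : (βr : ℂ) = μ₁ + μ₂ := by
    rw [hμ₁def, hμ₂def, _root_.inv_add_inv h1ne h2ne, hsum, hprod, hβr]
    push_cast
    ring
  have hγμ : (γr : ℂ) = μ₁ * μ₂ := by
    rw [hμ₁def, hμ₂def, ← mul_inv, hprod, hγr]
    push_cast
    ring
  have hpowM : ∀ i j, Tendsto (fun n => (Minv ^ n) i j) atTop (𝓝 0) :=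
    aux_pow Minv βr γr μ₁ μ₂ hμ₁ hμ₂ hβμ hγμ hM2
  have hpowN : ∀ i j, Tendsto (fun n => ((-Minv) ^ n) i j) atTop (𝓝 0) := by
    intro i j
    have hneg : ∀ n : ℕ, (-Minv) ^ n = ((-1:ℝ) ^ n) • Minv ^ n := by
      intro n
      rw [show -Minv = (-1:ℝ) • Minv by module, _root_.smul_pow]
    refine squeeze_zero_norm (a := fun n => ‖(Minv ^ n) i j‖) ?_ ?_
    · intro n
      rw [hneg n]
      simp [Matrix.smul_apply, abs_mul]
    · have := (hpowM i j).norm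
      simpa using this
  -- the symmetry center s and translation t
  set e1v : ℝ := (1:ℝ) + b + c with he1v
  set e2v : ℝ := (1:ℝ) - b + c with he2v
  set C1 : Matrix (Fin 2) (Fin 2) ℝ := B + ((1:ℝ)+b) • 1 with hC1
  set C2 : Matrix (Fin 2) (Fin 2) ℝ := B + ((b:ℝ)-1) • 1 with hC2
  set sv : Fin 2 → ℝ := (-(e1v⁻¹)) • (C1 *ᵥ ((m:ℝ) • v)) with hsv
  have hKey1 : B * C1 - C1 = (-e1v) • 1 := by
    rw [hC1, mul_add, Matrix.mul_smul, mul_one, hBB, he1v]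
    module
  have hs_key : B *ᵥ sv = sv + (m:ℝ) • v := by
    have h1 : B *ᵥ sv - sv = (m:ℝ) • v := by
      rw [hsv, Matrix.mulVec_smul, Matrix.mulVec_mulVec, ← smul_sub, ← Matrix.sub_mulVec, hKey1]
      rw [Matrix.smul_mulVec, Matrix.one_mulVec, smul_smul]
      rw [show (-(e1v⁻¹)) * (-e1v) = e1v⁻¹ * e1v by ring, inv_mul_cancel₀ he1, one_smul]
    have := h1
    rw [sub_eq_iff_eq_add] at this
    rw [this]; abel
  set tv : Fin 2 → ℝ := (-(e2v⁻¹)) • (C2 *ᵥ (-(sv + (m:ℝ) • v))) with htv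
  have hKey2 : B * C2 + C2 = (-e2v) • 1 := by
    rw [hC2, mul_add, Matrix.mul_smul, mul_one, hBB, he2v]
    module
  have ht_key : B *ᵥ tv + tv = -(sv + (m:ℝ) • v) := by
    rw [htv, Matrix.mulVec_smul, Matrix.mulVec_mulVec, ← smul_add, ← Matrix.add_mulVec, hKey2]
    rw [Matrix.smul_mulVec, Matrix.one_mulVec, smul_smul]
    rw [show (-(e2v⁻¹)) * (-e2v) = e2v⁻¹ * e2v by ring, inv_mul_cancel₀ he2, one_smul]
  -- membership characterisations
  have hmem₁ : ∀ x, x ∈ T₁ ↔ ∃ k : ℕ, k ≤ m ∧ ∃ y ∈ T₁, x = Minv *ᵥ (y + (k:ℝ) • v) := by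
    intro x
    conv_lhs => rw [hT₁]
    simp only [hD, Set.mem_iUnion, Set.mem_image, Set.mem_setOf_eq, exists_prop]
    constructor
    · rintro ⟨d, ⟨k, hk, rfl⟩, y, hy, rfl⟩
      exact ⟨k, hk, y, hy, rfl⟩
    · rintro ⟨k, hk, y, hy, rfl⟩
      exact ⟨(k:ℝ) • v, ⟨k, hk, rfl⟩, y, hy, rfl⟩
  have hmem₂ : ∀ x, x ∈ T₂ ↔ ∃ k : ℕ, k ≤ m ∧ ∃ y ∈ T₂, x = (-Minv) *ᵥ (y + (k:ℝ) • v) := by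
    intro x
    conv_lhs => rw [hT₂]
    simp only [hD, Set.mem_iUnion, Set.mem_image, Set.mem_setOf_eq, exists_prop, hnegB]
    constructor
    · rintro ⟨d, ⟨k, hk, rfl⟩, y, hy, rfl⟩
      exact ⟨k, hk, y, hy, rfl⟩
    · rintro ⟨k, hk, y, hy, rfl⟩
      exact ⟨(k:ℝ) • v, ⟨k, hk, rfl⟩, y, hy, rfl⟩
  -- the key algebraic identities
  have key₁ : ∀ (k j : ℕ), (k:ℝ) + (j:ℝ) = (m:ℝ) → ∀ q : Fin 2 → ℝ,
      Minv *ᵥ ((sv - q) + (j:ℝ) • v) = sv - Minv *ᵥ (q + (k:ℝ) • v) := by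
    intro k j hkj q
    have hinner : (sv - q) + (j:ℝ) • v = (sv + (m:ℝ) • v) - (q + (k:ℝ) • v) := by
      rw [← hkj]; module
    rw [hinner, ← hs_key, Matrix.mulVec_sub, Matrix.mulVec_mulVec, hiB, Matrix.one_mulVec]
  have hBt : -(B *ᵥ tv) = tv + (sv + (m:ℝ) • v) := by
    have h := congrArg (fun x => -x) ht_key
    simp only [neg_neg] at h
    rw [← h]
    abel
  have key₂ : ∀ (k j : ℕ), (k:ℝ) + (j:ℝ) = (m:ℝ) → ∀ q : Fin 2 → ℝ,
      -(Minv *ᵥ ((sv - q + tv) + (j:ℝ) • v)) = Minv *ᵥ (q + (k:ℝ) • v) + tv := by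
    intro k j hkj q
    have hinner : (sv - q + tv) + (j:ℝ) • v = -(B *ᵥ tv) - (q + (k:ℝ) • v) := by
      rw [hBt, ← hkj]; module
    rw [hinner, Matrix.mulVec_sub, Matrix.mulVec_neg, Matrix.mulVec_mulVec, hiB,
      Matrix.one_mulVec]
    abel
  -- compactness facts
  have hT₁cl : IsClosed T₁ := hT₁comp.isClosed
  have hT₂cl : IsClosed T₂ := hT₂comp.isClosed
  have hT₁bd : Bornology.IsBounded T₁ := hT₁comp.isBounded
  have hT₂bd : Bornology.IsBounded T₂ := hT₂comp.isBounded
  -- the reflected set S = sv - T₁ is contained in T₁ (symmetry of T₁)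
  have hY₁ : ∀ d ∈ D, ∀ y ∈ T₁, Minv *ᵥ (y + d) ∈ T₁ := by
    intro d hd y hy
    rw [hD] at hd
    obtain ⟨k, hk, rfl⟩ := hd
    exact (hmem₁ _).mpr ⟨k, hk, y, hy, rfl⟩
  have hsym : ∀ x ∈ T₁, sv - x ∈ T₁ := by
    have hsub : (fun x => sv - x) '' T₁ ⊆ T₁ := by
      apply aux_subset Minv hpowM D _ T₁
        ((hT₁comp.image (continuous_const.sub continuous_id')).isBounded)
        hT₁bd hT₁ne hT₁cl
      · rintro x ⟨p, hp, rfl⟩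
        obtain ⟨k, hk, y, hy, hpe⟩ := (hmem₁ p).mp hp
        have hkj : (k:ℝ) + ((m - k : ℕ):ℝ) = (m:ℝ) := by
          rw [Nat.cast_sub hk]; ring
        refine ⟨((m - k : ℕ):ℝ) • v, ?_, sv - y, ⟨y, hy, rfl⟩, ?_⟩
        · rw [hD]; exact ⟨m - k, by omega, rfl⟩
        · rw [key₁ k (m - k) hkj y, ← hpe]; rfl
      · exact hY₁
    intro x hx
    exact hsub ⟨x, hx, rfl⟩
  -- the translated set U = T₁ + tv equals T₂
  set U : Set (Fin 2 → ℝ) := (fun x => x + tv) '' T₁ with hUdef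
  have hUcomp : IsCompact U := hT₁comp.image (continuous_id.add continuous_const)
  have hUne : U.Nonempty := hT₁ne.image _
  have hU_X : ∀ x ∈ U, ∃ d ∈ D, ∃ q ∈ U, x = (-Minv) *ᵥ (q + d) := by
    rintro x ⟨p, hp, rfl⟩
    obtain ⟨k, hk, y, hy, hpe⟩ := (hmem₁ p).mp hp
    have hkj : (k:ℝ) + ((m - k : ℕ):ℝ) = (m:ℝ) := by
      rw [Nat.cast_sub hk]; ring
    refine ⟨((m - k : ℕ):ℝ) • v, ?_, (sv - y) + tv, ⟨sv - y, hsym y hy, rfl⟩, ?_⟩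
    · rw [hD]; exact ⟨m - k, by omega, rfl⟩
    · rw [Matrix.neg_mulVec, key₂ k (m - k) hkj y, ← hpe]
  have hU_Y : ∀ d ∈ D, ∀ y ∈ U, (-Minv) *ᵥ (y + d) ∈ U := by
    intro d hd x hx
    rw [hD] at hd
    obtain ⟨j, hj, rfl⟩ := hd
    obtain ⟨r, hr, rfl⟩ := hx
    have hkj : ((m - j : ℕ):ℝ) + (j:ℝ) = (m:ℝ) := by
      rw [Nat.cast_sub hj]; ring
    have hin : (r + tv) + (j:ℝ) • v = (sv - (sv - r) + tv) + (j:ℝ) • v := by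
      rw [sub_sub_cancel]
    rw [Matrix.neg_mulVec, hin, key₂ (m - j) j hkj (sv - r)]
    exact ⟨Minv *ᵥ ((sv - r) + ((m - j : ℕ):ℝ) • v),
      (hmem₁ _).mpr ⟨m - j, by omega, sv - r, hsym r hr, rfl⟩, rfl⟩
  have hT₂_X : ∀ x ∈ T₂, ∃ d ∈ D, ∃ q ∈ T₂, x = (-Minv) *ᵥ (q + d) := by
    intro x hx
    obtain ⟨k, hk, y, hy, hpe⟩ := (hmem₂ x).mp hx
    refine ⟨(k:ℝ) • v, ?_, y, hy, hpe⟩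
    rw [hD]; exact ⟨k, hk, rfl⟩
  have hT₂_Y : ∀ d ∈ D, ∀ y ∈ T₂, (-Minv) *ᵥ (y + d) ∈ T₂ := by
    intro d hd y hy
    rw [hD] at hd
    obtain ⟨k, hk, rfl⟩ := hd
    exact (hmem₂ _).mpr ⟨k, hk, y, hy, rfl⟩
  have hUT2 : U = T₂ := by
    apply Set.Subset.antisymm
    · exact aux_subset (-Minv) hpowN D U T₂ hUcomp.isBounded hT₂bd hT₂ne hT₂cl hU_X hT₂_Y
    · exact aux_subset (-Minv) hpowN D T₂ U hT₂bd hUcomp.isBounded hUne hUcomp.isClosed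
        hT₂_X hU_Y
  -- conclusion
  have hback : T₁ = (fun x => x - tv) '' U := by
    rw [hUdef, ← Set.image_comp]
    have : ((fun x => x - tv) ∘ fun x => x + tv) = id := by
      funext x; simp
    rw [this, Set.image_id]
  constructor
  · intro h
    rw [← hUT2]
    exact h.image _ (continuous_id.add continuous_const).continuousOn
  · intro h
    rw [hback, ← hUT2] at *
    exact h.image _ (continuous_id.sub continuous_const).continuousOn
end

section
/- Suppose Δ = b² − 4c ≥ 0 and c > 0. Then the series Σ_{i=1}^∞ |α_i| and Σ_{i=1}^∞ |β_i| converge, with Σ_{i=1}^∞ |α_i| = (|b| − 1)/(c − |b| + 1) and Σ_{i=1}^∞ |β_i| = 1/(c − |b| + 1). -/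
open Matrix Polynomial

/-- complete homogeneous symmetric function in two variables -/
noncomputable def hh (s t : ℝ) : ℕ → ℝ
  | 0 => 1
  | (i+1) => s * hh s t i + t ^ (i+1)

@[simp] lemma hh_zero (s t : ℝ) : hh s t 0 = 1 := rfl

lemma hh_succ (s t : ℝ) (i : ℕ) : hh s t (i+1) = s * hh s t i + t ^ (i+1) := rfl

lemma hh_pos {s t : ℝ} (hs : 0 < s) (ht : 0 < t) (i : ℕ) : 0 < hh s t i := by
  induction i with
  | zero => norm_num
  | succ n ih => have := pow_pos ht (n+1); rw [hh_succ]; positivity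

lemma hh_le {s t : ℝ} (hs : 0 < s) (ht : 0 < t) (i : ℕ) :
    hh s t i ≤ (i+1 : ℝ) * (max s t) ^ i := by
  induction i with
  | zero => norm_num
  | succ n ih =>
      have hm : 0 < max s t := lt_of_lt_of_le hs (le_max_left _ _)
      have h1 : s * hh s t n ≤ max s t * ((n+1 : ℝ) * (max s t) ^ n) := by
        apply mul_le_mul (le_max_left _ _) ih (hh_pos hs ht n).le hm.le
      have h2 : t ^ (n+1) ≤ (max s t) ^ (n+1) :=
        pow_le_pow_left₀ ht.le (le_max_right _ _) _
      rw [hh_succ]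
      push_cast
      calc s * hh s t n + t ^ (n+1)
          ≤ max s t * ((n+1 : ℝ) * (max s t) ^ n) + (max s t) ^ (n+1) := by
            exact add_le_add h1 h2
        _ = ((n : ℝ) + 1 + 1) * (max s t) ^ (n+1) := by ring

lemma hh_rec2 (s t : ℝ) (j : ℕ) :
    hh s t (j+2) = (s+t) * hh s t (j+1) - s*t * hh s t j := by
  rw [hh_succ s t (j+1), hh_succ s t j]; ring

lemma hh_hasSum {s t : ℝ} (hs : 0 < s) (hs1 : s < 1) (ht : 0 < t) (ht1 : t < 1) :
    HasSum (hh s t) (((1-s)*(1-t))⁻¹) := by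
  have hm1 : max s t < 1 := max_lt hs1 ht1
  have hm0 : 0 < max s t := lt_of_lt_of_le hs (le_max_left _ _)
  have hsummable : Summable (hh s t) := by
    apply Summable.of_nonneg_of_le (fun i => (hh_pos hs ht i).le) (hh_le hs ht)
    have h1 : Summable (fun i : ℕ => (i : ℝ) * (max s t) ^ i) := by
      simpa using summable_pow_mul_geometric_of_norm_lt_one 1
        (r := max s t) (by rw [Real.norm_eq_abs, abs_of_pos hm0]; exact hm1)
    have h2 : Summable (fun i : ℕ => (max s t) ^ i) :=
      summable_geometric_of_lt_one hm0.le hm1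
    simpa [add_mul] using h1.add h2
  set H := ∑' i, hh s t i with hHdef
  have hH : HasSum (hh s t) H := hsummable.hasSum
  have h1 : HasSum (fun i => hh s t (i+1)) (H - 1) := by
    rw [hasSum_nat_add_iff 1]
    simpa using hH
  have hg : HasSum (fun i : ℕ => t * t ^ i) (t * (1-t)⁻¹) :=
    (hasSum_geometric_of_lt_one ht.le ht1).mul_left t
  have h2 : HasSum (fun i : ℕ => s * hh s t i + t ^ (i+1)) (s * H + t * (1-t)⁻¹) := by
    have := (hH.mul_left s).add hg
    simpa [pow_succ, mul_comm] using this
  have h2' : HasSum (fun i : ℕ => hh s t (i+1)) (s * H + t * (1-t)⁻¹) := by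
    simpa only [← hh_succ] using h2
  have heq : H - 1 = s * H + t * (1-t)⁻¹ := h1.unique h2'
  have ht0 : (1:ℝ) - t ≠ 0 := by linarith
  have hs0 : (1:ℝ) - s ≠ 0 := by linarith
  have : H = ((1-s)*(1-t))⁻¹ := by
    field_simp at heq ⊢
    nlinarith [heq]
  rwa [this] at hH

/-- If `Δ = b² - 4c ≥ 0` and `c > 0`, then `Σ_{i≥1} |αᵢ|` and
`Σ_{i≥1} |βᵢ|` converge, with `Σ |αᵢ| = (|b| - 1)/(c - |b| + 1)` and
`Σ |βᵢ| = 1/(c - |b| + 1)`. -/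
theorem stmt14 (A : Matrix (Fin 2) (Fin 2) ℤ) (b c : ℤ)
    (hchar : A.charpoly = X ^ 2 + C b * X + C c)
    (hexp : ∀ z : ℂ, (A.charpoly.map (Int.castRingHom ℂ)).IsRoot z → 1 < ‖z‖)
    (v : Fin 2 → ℝ)
    (hv : LinearIndependent ℝ ![v, (A.map (Int.cast : ℤ → ℝ)) *ᵥ v])
    (α β : ℕ → ℝ)
    (hαβ : ∀ i : ℕ, 1 ≤ i →
      ((A.map (Int.cast : ℤ → ℝ))⁻¹ ^ i) *ᵥ v
        = α i • v + β i • ((A.map (Int.cast : ℤ → ℝ)) *ᵥ v))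
    (hΔ : 0 ≤ b ^ 2 - 4 * c) (hc : 0 < c) :
    HasSum (fun i : ℕ => |α (i + 1)|) (((|b| : ℤ) - 1 : ℤ) / ((c - |b| + 1 : ℤ) : ℝ)) ∧
      HasSum (fun i : ℕ => |β (i + 1)|) (1 / ((c - |b| + 1 : ℤ) : ℝ)) := by
  set B := A.map (Int.cast : ℤ → ℝ) with hB
  have hcR : (0:ℝ) < (c:ℝ) := by exact_mod_cast hc
  have hbne : b ≠ 0 := by
    intro h; rw [h] at hΔ; simp at hΔ; omega
  -- Part 1 : matrix identities
  have hBchar : B.charpoly = X ^ 2 + C (b:ℝ) * X + C (c:ℝ) := by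
    have : B = A.map (Int.castRingHom ℝ) := rfl
    rw [this, Matrix.charpoly_map, hchar]
    simp [Polynomial.map_add, Polynomial.map_mul]
  have hCH : B * B + (b:ℝ) • B + (c:ℝ) • 1 = 0 := by
    have h2 := Matrix.aeval_self_charpoly B
    rw [hBchar] at h2
    simp only [map_add, _root_.map_mul, map_pow, aeval_X, aeval_C, sq] at h2
    rw [show (algebraMap ℝ (Matrix (Fin 2) (Fin 2) ℝ)) (b:ℝ) = (b:ℝ) • 1 from
        Algebra.algebraMap_eq_smul_one _,
      show (algebraMap ℝ (Matrix (Fin 2) (Fin 2) ℝ)) (c:ℝ) = (c:ℝ) • 1 from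
        Algebra.algebraMap_eq_smul_one _, smul_mul_assoc, one_mul] at h2
    exact h2
  have h3 : B * (B + (b:ℝ) • 1) = (-(c:ℝ)) • 1 := by
    rw [mul_add, mul_smul_comm, mul_one, neg_smul]
    linear_combination (norm := abel) hCH
  have hcne : (-(c:ℝ)) ≠ 0 := neg_ne_zero.mpr hcR.ne'
  have hNB : B * ((-(c:ℝ))⁻¹ • (B + (b:ℝ) • 1)) = 1 := by
    rw [mul_smul_comm, h3, smul_smul, inv_mul_cancel₀ hcne, one_smul]
  have hBinv : B⁻¹ = (-(c:ℝ))⁻¹ • (B + (b:ℝ) • 1) := Matrix.inv_eq_right_inv hNB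
  have hBinvB : B⁻¹ * B = 1 := by rw [hBinv]; exact mul_eq_one_comm.mp hNB
  have hBinv_v : B⁻¹ *ᵥ v = (-(b:ℝ)/c) • v + (-(1:ℝ)/c) • (B *ᵥ v) := by
    rw [hBinv, Matrix.smul_mulVec, Matrix.add_mulVec, Matrix.smul_mulVec,
      Matrix.one_mulVec]
    match_scalars <;> field_simp
  have hBinvBv : B⁻¹ *ᵥ (B *ᵥ v) = v := by
    rw [Matrix.mulVec_mulVec, hBinvB, Matrix.one_mulVec]
  have huniq : ∀ x y x' y' : ℝ,
      x • v + y • (B *ᵥ v) = x' • v + y' • (B *ᵥ v) → x = x' ∧ y = y' := by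
    intro x y x' y' h
    have h0 : (x - x') • v + (y - y') • (B *ᵥ v) = 0 := by
      rw [sub_smul, sub_smul]
      rw [show x • v - x' • v + (y • (B *ᵥ v) - y' • (B *ᵥ v))
          = (x • v + y • (B *ᵥ v)) - (x' • v + y' • (B *ᵥ v)) by abel, h, sub_self]
    obtain ⟨h1, h2⟩ := LinearIndependent.pair_iff.mp hv _ _ h0
    exact ⟨by linarith, by linarith⟩
  -- Part 2 : eigenvalue estimates
  obtain ⟨s, t, hs0, hs1, ht0, ht1, hst, hstsum⟩ :
      ∃ s t : ℝ, 0 < s ∧ s < 1 ∧ 0 < t ∧ t < 1 ∧ s * t = ((c:ℝ))⁻¹ ∧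
        s + t = |(b:ℝ)| / c := by
    have hΔR : (0:ℝ) ≤ (b:ℝ)^2 - 4*(c:ℝ) := by exact_mod_cast hΔ
    set D := Real.sqrt ((b:ℝ)^2 - 4*(c:ℝ)) with hD
    have hD2 : D^2 = (b:ℝ)^2 - 4*(c:ℝ) := Real.sq_sqrt hΔR
    set l1 := (-(b:ℝ) + D)/2 with hl1
    set l2 := (-(b:ℝ) - D)/2 with hl2
    have hroot1 : l1^2 + (b:ℝ)*l1 + (c:ℝ) = 0 := by
      rw [hl1]; linear_combination (1/4) * hD2
    have hroot2 : l2^2 + (b:ℝ)*l2 + (c:ℝ) = 0 := by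
      rw [hl2]; linear_combination (1/4) * hD2
    have hprod : l1 * l2 = (c:ℝ) := by
      rw [hl1, hl2]; linear_combination (-(1/4)) * hD2
    have hsum : l1 + l2 = -(b:ℝ) := by rw [hl1, hl2]; ring
    have hmapchar : A.charpoly.map (Int.castRingHom ℂ) = X ^ 2 + C (b:ℂ) * X + C (c:ℂ) := by
      rw [hchar]; simp [Polynomial.map_add, Polynomial.map_mul]
    have habs : ∀ l : ℝ, l^2 + (b:ℝ)*l + (c:ℝ) = 0 → 1 < |l| := by
      intro l hl
      have : (A.charpoly.map (Int.castRingHom ℂ)).IsRoot (l:ℂ) := by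
        rw [hmapchar]
        simp only [IsRoot, eval_add, eval_mul, eval_pow, eval_X, eval_C]
        exact_mod_cast congrArg (Complex.ofReal) hl
      have h2 := hexp _ this
      rwa [Complex.norm_real, Real.norm_eq_abs] at h2
    have hL1 : 1 < |l1| := habs _ hroot1
    have hL2 : 1 < |l2| := habs _ hroot2
    refine ⟨|l1|⁻¹, |l2|⁻¹, by positivity, ?_, by positivity, ?_, ?_, ?_⟩
    · rw [inv_lt_one_iff₀]; right; exact hL1
    · rw [inv_lt_one_iff₀]; right; exact hL2
    · rw [← mul_inv, ← abs_mul, hprod, abs_of_pos hcR]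
    · have habs_add : |l1| + |l2| = |(b:ℝ)| := by
        rcases lt_or_gt_of_ne
            (show l1 ≠ 0 by intro h; rw [h] at hL1; simp at hL1; linarith) with h1 | h1
        · have h2 : l2 < 0 := by nlinarith
          rw [show |(b:ℝ)| = |l1+l2| by rw [hsum, abs_neg],
            abs_of_neg (by linarith : l1 + l2 < 0), abs_of_neg h1, abs_of_neg h2]; ring
        · have h2 : 0 < l2 := by nlinarith
          rw [show |(b:ℝ)| = |l1+l2| by rw [hsum, abs_neg],
            abs_of_pos (by linarith : 0 < l1 + l2), abs_of_pos h1, abs_of_pos h2]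
      rw [inv_add_inv (by positivity) (by positivity), ← abs_mul, hprod, abs_of_pos hcR,
        habs_add]
  -- Part 3 : sign bookkeeping
  set ε : ℝ := if 0 < b then -1 else 1 with hε
  have hε2 : ε * ε = 1 := by rw [hε]; split <;> norm_num
  have hεabs : |ε| = 1 := by rw [hε]; split <;> norm_num
  have hεb : ε * |(b:ℝ)| = -(b:ℝ) := by
    rw [hε]; split
    · next h => rw [abs_of_pos (by exact_mod_cast h : (0:ℝ) < b)]; ring
    · next h =>
        have : b < 0 := by omega
        rw [abs_of_neg (by exact_mod_cast this : (b:ℝ) < 0)]; norm_num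
  have hbc : -(b:ℝ)/c = ε * (s+t) := by
    rw [hstsum, ← hεb]; ring
  -- Part 4 : the inductive formula
  set qc : ℕ → ℝ :=
    fun i => Nat.rec (motive := fun _ => ℝ) 0 (fun j _ => -(ε^j * (s*t) * hh s t j)) i
    with hqc
  have hqc0 : qc 0 = 0 := rfl
  have hqcS : ∀ j, qc (j+1) = -(ε^j * (s*t) * hh s t j) := fun j => rfl
  have key : ∀ i : ℕ, (B⁻¹)^i *ᵥ v = (ε^i * hh s t i) • v + qc i • (B *ᵥ v) := by
    intro i
    induction i with
    | zero => simp [hqc0, Matrix.one_mulVec]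
    | succ n ih =>
        have h1 : (B⁻¹)^(n+1) *ᵥ v = B⁻¹ *ᵥ ((B⁻¹)^n *ᵥ v) := by
          rw [pow_succ', ← Matrix.mulVec_mulVec]
        rw [h1, ih, Matrix.mulVec_add, Matrix.mulVec_smul, Matrix.mulVec_smul, hBinv_v,
          hBinvBv]
        have e1 : ε^(n+1) * hh s t (n+1) = (ε^n * hh s t n) * (-(b:ℝ)/c) + qc n := by
          cases n with
          | zero =>
              rw [hqc0, hbc, hh_succ]
              simp only [hh_zero, pow_one, pow_zero]
              ring
          | succ j =>
              rw [hqcS j, hbc, hh_rec2 s t j]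
              linear_combination (-(ε^j * (s*t) * hh s t j)) * hε2
        have e2 : qc (n+1) = (ε^n * hh s t n) * (-(1:ℝ)/c) := by
          rw [hqcS n, hst]
          field_simp
        rw [e1, e2]
        module
  have hαn : ∀ n : ℕ, α (n+1) = ε^(n+1) * hh s t (n+1) ∧
      β (n+1) = -(ε^n * (s*t) * hh s t n) := by
    intro n
    have h1 := hαβ (n+1) (by omega)
    have h2 := key (n+1)
    rw [hqcS n] at h2
    exact huniq _ _ _ _ (h1.symm.trans h2)
  -- Part 5 : summing up
  have hεpow : ∀ k : ℕ, |ε ^ k| = 1 := by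
    intro k; rw [abs_pow, hεabs, one_pow]
  have hαabs : ∀ n : ℕ, |α (n+1)| = hh s t (n+1) := by
    intro n
    rw [(hαn n).1, abs_mul, hεpow, one_mul, abs_of_pos (hh_pos hs0 ht0 _)]
  have hβabs : ∀ n : ℕ, |β (n+1)| = (s*t) * hh s t n := by
    intro n
    rw [(hαn n).2, abs_neg, abs_mul, abs_mul, hεpow, one_mul,
      abs_of_pos (hh_pos hs0 ht0 _), abs_of_pos (by positivity : (0:ℝ) < s*t)]
  have hH := hh_hasSum hs0 hs1 ht0 ht1
  have hden : (1-s)*(1-t) = ((c:ℝ) - |(b:ℝ)| + 1)/c := by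
    have e : (1-s)*(1-t) = 1 - (s+t) + s*t := by ring
    rw [e, hstsum, hst]
    field_simp
  have hdpos : 0 < (c:ℝ) - |(b:ℝ)| + 1 := by
    have h1 : 0 < (1-s)*(1-t) := by nlinarith
    rw [hden] at h1
    exact (div_pos_iff.mp h1).resolve_right (fun h => absurd hcR (by linarith [h.2])) |>.1
  have hHval : ((1-s)*(1-t))⁻¹ = (c:ℝ) / ((c:ℝ) - |(b:ℝ)| + 1) := by
    rw [hden, inv_div]
  constructor
  · have hsum1 : HasSum (fun n => hh s t (n+1)) (((1-s)*(1-t))⁻¹ - 1) := by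
      rw [hasSum_nat_add_iff 1]
      simpa using hH
    have : (fun n : ℕ => |α (n+1)|) = fun n => hh s t (n+1) := funext hαabs
    rw [this]
    convert hsum1 using 1
    rw [hHval]
    push_cast [Int.cast_abs]
    field_simp
    ring
  · have hsum2 : HasSum (fun n => (s*t) * hh s t n) ((s*t) * ((1-s)*(1-t))⁻¹) :=
      hH.mul_left _
    have : (fun n : ℕ => |β (n+1)|) = fun n => (s*t) * hh s t n := funext hβabs
    rw [this]
    convert hsum2 using 1
    rw [hHval, hst]
    push_cast [Int.cast_abs]
    field_simp
end

section
/- Suppose Δ = b² − 4c ≥ 0 and c < 0. Then the series Σ_{i=1}^∞ |α_i| and Σ_{i=1}^∞ |β_i| converge, with Σ_{i=1}^∞ |α_i| = (|b| + 1)/(|c| − |b| − 1) and Σ_{i=1}^∞ |β_i| = 1/(|c| − |b| − 1). -/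
open Matrix Polynomial

lemma abs_add_of_mul_nonneg' (x y : ℝ) (h : 0 ≤ x * y) : |x + y| = |x| + |y| := by
  rcases le_or_gt 0 x with hx | hx <;> rcases le_or_gt 0 y with hy | hy
  · rw [abs_of_nonneg hx, abs_of_nonneg hy, abs_of_nonneg (by linarith)]
  · have hx0 : x = 0 := le_antisymm (by nlinarith) hx
    simp [hx0]
  · have hy0 : y = 0 := le_antisymm (by nlinarith) hy
    simp [hy0]
  · rw [abs_of_neg hx, abs_of_neg hy, abs_of_neg (by linarith)]; ring

lemma seq_key (b e : ℝ) (he : 0 < e) (hgap : 0 < e - |b| - 1)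
    (a d : ℕ → ℝ)
    (ha0 : a 0 = b / e) (hd0 : d 0 = 1 / e)
    (ha : ∀ i, a (i+1) = d i + (b/e) * a i)
    (hd : ∀ i, d (i+1) = a i / e) :
    HasSum (fun i => |a i|) ((|b|+1)/(e-|b|-1)) ∧
      HasSum (fun i => |d i|) (1/(e-|b|-1)) := by
  have hsign : ∀ i, 0 ≤ b * a i * d i := by
    intro i
    induction i with
    | zero => rw [ha0, hd0, show b*(b/e)*(1/e) = b^2/e^2 by ring]; positivity
    | succ n ih =>
      rw [ha n, hd n]
      have h1 : b * (d n + b/e * a n) * (a n / e)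
          = (b * a n * d n) / e + (b * a n)^2 / e^2 := by ring
      rw [h1]
      positivity
  have hB : 0 ≤ |b| := abs_nonneg b
  have haabs : ∀ i, |a (i+1)| = |d i| + (|b|/e) * |a i| := by
    intro i
    rw [ha i, abs_add_of_mul_nonneg' _ _ (by
      have : d i * (b/e * a i) = (b * a i * d i)/e := by ring
      rw [this]; exact div_nonneg (hsign i) he.le), abs_mul, abs_div, abs_of_pos he]
  have hdabs : ∀ i, |d (i+1)| = |a i| / e := by
    intro i
    rw [hd i, abs_div, abs_of_pos he]
  have ha0abs : |a 0| = |b| / e := by rw [ha0, abs_div, abs_of_pos he]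
  have hd0abs : |d 0| = 1 / e := by rw [hd0, abs_div, abs_of_pos he]; simp
  set S : ℝ := (|b|+1)/(e-|b|-1) with hS
  set T : ℝ := 1/(e-|b|-1) with hT
  have hSnn : 0 ≤ S := by positivity
  have hTnn : 0 ≤ T := by positivity
  have hSid : S = |b|/e + T + (|b|/e) * S := by
    rw [hS, hT]; field_simp; ring
  have hTid : T = 1/e + (1/e) * S := by
    rw [hS, hT]; field_simp; ring
  have hbound : ∀ n, (∑ i ∈ Finset.range n, |a i|) ≤ S ∧ (∑ i ∈ Finset.range n, |d i|) ≤ T := by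
    intro n
    induction n with
    | zero => simp [hSnn, hTnn]
    | succ n ih =>
      constructor
      · rw [Finset.sum_range_succ']
        have h1 : ∑ i ∈ Finset.range n, |a (i+1)|
            = (∑ i ∈ Finset.range n, |d i|) + (|b|/e) * ∑ i ∈ Finset.range n, |a i| := by
          rw [Finset.mul_sum, ← Finset.sum_add_distrib]
          exact Finset.sum_congr rfl fun i _ => haabs i
        rw [h1, ha0abs, hSid]
        have := mul_le_mul_of_nonneg_left ih.1 (by positivity : (0:ℝ) ≤ |b|/e)
        linarith [ih.2]
      · rw [Finset.sum_range_succ']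
        have h1 : ∑ i ∈ Finset.range n, |d (i+1)|
            = (1/e) * ∑ i ∈ Finset.range n, |a i| := by
          rw [Finset.mul_sum]
          exact Finset.sum_congr rfl fun i _ => by rw [hdabs i]; ring
        rw [h1, hd0abs, hTid]
        have := mul_le_mul_of_nonneg_left ih.1 (by positivity : (0:ℝ) ≤ 1/e)
        linarith
  have hsa : Summable (fun i => |a i|) :=
    summable_of_sum_range_le (fun n => abs_nonneg _) (fun n => (hbound n).1)
  have hsd : Summable (fun i => |d i|) :=
    summable_of_sum_range_le (fun n => abs_nonneg _) (fun n => (hbound n).2)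
  set Sa := ∑' i, |a i| with hSa
  set Sd := ∑' i, |d i| with hSd
  have hEq1 : Sa = |b|/e + (Sd + (|b|/e) * Sa) := by
    rw [hSa]; conv_lhs => rw [Summable.tsum_eq_zero_add hsa, ha0abs]
    congr 1
    calc ∑' i, |a (i+1)| = ∑' i, (|d i| + (|b|/e) * |a i|) := by
          exact tsum_congr fun i => haabs i
      _ = Sd + (|b|/e) * Sa := by
          rw [Summable.tsum_add hsd (hsa.mul_left _), tsum_mul_left]
  have hEq2 : Sd = 1/e + (1/e) * Sa := by
    rw [hSd]; conv_lhs => rw [Summable.tsum_eq_zero_add hsd, hd0abs]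
    congr 1
    calc ∑' i, |d (i+1)| = ∑' i, (1/e) * |a i| := by
          exact tsum_congr fun i => by rw [hdabs i]; ring
      _ = (1/e) * Sa := tsum_mul_left
  have he' : e ≠ 0 := he.ne'
  have hgap' : e - |b| - 1 ≠ 0 := hgap.ne'
  have hSaS : Sa = S := by
    rw [hEq2] at hEq1
    rw [hS]
    field_simp at hEq1 ⊢
    nlinarith [hEq1]
  have hSdT : Sd = T := by
    rw [hEq2, hSaS, hTid]
  exact ⟨hSaS ▸ hsa.hasSum, hSdT ▸ hsd.hasSum⟩

lemma gap_lemma (A : Matrix (Fin 2) (Fin 2) ℤ) (b c : ℤ)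
    (hchar : A.charpoly = X ^ 2 + C b * X + C c)
    (hexp : ∀ z : ℂ, (A.charpoly.map (Int.castRingHom ℂ)).IsRoot z → 1 < ‖z‖)
    (hΔ : 0 ≤ b ^ 2 - 4 * c) (hc : c < 0) :
    (0:ℝ) < -(c:ℝ) - |(b:ℝ)| - 1 := by
  have hcr : (c:ℝ) < 0 := by exact_mod_cast hc
  have hΔr : (0:ℝ) ≤ (b:ℝ)^2 - 4*(c:ℝ) := by
    have : ((0:ℤ):ℝ) ≤ ((b^2 - 4*c : ℤ):ℝ) := Int.cast_le.mpr hΔ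
    push_cast at this; linarith
  set s := Real.sqrt ((b:ℝ)^2 - 4*(c:ℝ)) with hs
  have hs2 : s^2 = (b:ℝ)^2 - 4*(c:ℝ) := Real.sq_sqrt hΔr
  have hsnn : 0 ≤ s := Real.sqrt_nonneg _
  set r1 : ℝ := (-(b:ℝ) + s)/2 with hr1d
  set r2 : ℝ := (-(b:ℝ) - s)/2 with hr2d
  have hr1 : r1^2 + b*r1 + c = 0 := by rw [hr1d]; nlinarith [hs2]
  have hr2 : r2^2 + b*r2 + c = 0 := by rw [hr2d]; nlinarith [hs2]
  have hroot : ∀ r : ℝ, r^2 + b*r + c = 0 → 1 < |r| := by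
    intro r hr
    have hz : (A.charpoly.map (Int.castRingHom ℂ)).IsRoot ((r:ℂ)) := by
      rw [hchar]
      simp only [IsRoot, Polynomial.map_add, Polynomial.map_mul, Polynomial.map_pow,
        Polynomial.map_X, Polynomial.map_C, Int.coe_castRingHom, eval_add, eval_mul,
        eval_pow, eval_X, eval_C]
      have : ((r^2 + b*r + c : ℝ) : ℂ) = 0 := by rw [hr]; norm_num
      push_cast at this
      linear_combination this
    have := hexp _ hz
    rwa [Complex.norm_real, Real.norm_eq_abs] at this
  have h1 := hroot r1 hr1
  have h2 := hroot r2 hr2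
  have hprod : r1 * r2 = (c:ℝ) := by rw [hr1d, hr2d]; nlinarith [hs2]
  have hsum : r1 + r2 = -(b:ℝ) := by rw [hr1d, hr2d]; ring
  have hr2neg : r2 < 0 := by nlinarith [hprod, hcr, hsnn]
  have hr1pos : 0 < r1 := by nlinarith [hprod, hcr, hr2neg]
  rw [abs_of_pos hr1pos] at h1
  rw [abs_of_neg hr2neg] at h2
  rcases abs_cases ((b:ℝ)) with ⟨e3, _⟩ | ⟨e3, _⟩ <;> rw [e3] <;>
    nlinarith [h1, h2, hprod, hsum]

set_option maxHeartbeats 1000000 in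
/-- If `Δ = b² - 4c ≥ 0` and `c < 0`, then `Σ_{i≥1} |αᵢ|` and
`Σ_{i≥1} |βᵢ|` converge, with `Σ |αᵢ| = (|b| + 1)/(|c| - |b| - 1)` and
`Σ |βᵢ| = 1/(|c| - |b| - 1)`. -/
theorem stmt15 (A : Matrix (Fin 2) (Fin 2) ℤ) (b c : ℤ)
    (hchar : A.charpoly = X ^ 2 + C b * X + C c)
    (hexp : ∀ z : ℂ, (A.charpoly.map (Int.castRingHom ℂ)).IsRoot z → 1 < ‖z‖)
    (v : Fin 2 → ℝ)
    (hv : LinearIndependent ℝ ![v, (A.map (Int.cast : ℤ → ℝ)) *ᵥ v])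
    (α β : ℕ → ℝ)
    (hαβ : ∀ i : ℕ, 1 ≤ i →
      ((A.map (Int.cast : ℤ → ℝ))⁻¹ ^ i) *ᵥ v
        = α i • v + β i • ((A.map (Int.cast : ℤ → ℝ)) *ᵥ v))
    (hΔ : 0 ≤ b ^ 2 - 4 * c) (hc : c < 0) :
    HasSum (fun i : ℕ => |α (i + 1)|) (((|b| : ℤ) + 1 : ℤ) / ((|c| - |b| - 1 : ℤ) : ℝ)) ∧
      HasSum (fun i : ℕ => |β (i + 1)|) (1 / ((|c| - |b| - 1 : ℤ) : ℝ)) := by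
  set M := A.map (Int.cast : ℤ → ℝ) with hM
  have hcr : (c:ℝ) < 0 := by exact_mod_cast hc
  have hc0 : (c:ℝ) ≠ 0 := ne_of_lt hcr
  -- Cayley–Hamilton over ℝ
  have h2 : M * M + (b:ℝ) • M + (c:ℝ) • 1 = 0 := by
    have h1 : M.charpoly = X ^ 2 + C (b:ℝ) * X + C (c:ℝ) := by
      have := Matrix.charpoly_map A (Int.castRingHom ℝ)
      rw [hchar] at this
      simpa using this
    have h2 := Matrix.aeval_self_charpoly M
    rw [h1] at h2
    simp only [map_add, _root_.map_mul, map_pow, aeval_X, aeval_C,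
      Algebra.algebraMap_eq_smul_one, smul_one_mul, sq] at h2
    convert h2 using 2
  -- inverse formula
  have hMB : M * (M + (b:ℝ) • 1) = (-(c:ℝ)) • 1 := by
    have h3 : M * M + (b:ℝ) • M = -((c:ℝ) • 1) := add_eq_zero_iff_eq_neg.mp h2
    rw [mul_add, Matrix.mul_smul, mul_one, h3, neg_smul]
  have hright : M * ((-(c:ℝ))⁻¹ • (M + (b:ℝ) • 1)) = 1 := by
    rw [Matrix.mul_smul, hMB, smul_smul, inv_mul_cancel₀ (by simpa using hc0), one_smul]
  have hinv : M⁻¹ = (-(c:ℝ))⁻¹ • (M + (b:ℝ) • 1) := Matrix.inv_eq_right_inv hright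
  have hleft : M⁻¹ * M = 1 := by rw [hinv, mul_eq_one_comm.mp hright]
  have hMinvV : M⁻¹ *ᵥ v = (-(b:ℝ)/(c:ℝ)) • v + (-1/(c:ℝ)) • (M *ᵥ v) := by
    rw [hinv, Matrix.smul_mulVec, Matrix.add_mulVec, Matrix.smul_mulVec,
      Matrix.one_mulVec, smul_add, smul_smul]
    rw [show (-(c:ℝ))⁻¹ * (b:ℝ) = -(b:ℝ)/(c:ℝ) by
        field_simp,
      show (-(c:ℝ))⁻¹ = -1/(c:ℝ) by field_simp]
    exact add_comm _ _
  have hMinvMV : M⁻¹ *ᵥ (M *ᵥ v) = v := by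
    rw [Matrix.mulVec_mulVec, hleft, Matrix.one_mulVec]
  -- uniqueness of coordinates
  have huniq : ∀ x y x' y' : ℝ, x • v + y • (M *ᵥ v) = x' • v + y' • (M *ᵥ v) →
      x = x' ∧ y = y' := by
    intro x y x' y' h
    have h2 := (Fintype.linearIndependent_iff.mp hv) ![x - x', y - y'] ?_
    · constructor
      · have := h2 0; simp at this; linarith
      · have := h2 1; simp at this; linarith
    · simp only [Fin.sum_univ_two, Matrix.cons_val_zero, Matrix.cons_val_one, Matrix.head_cons, sub_smul]
      rw [show x • v - x' • v + (y • (M *ᵥ v) - y' • (M *ᵥ v))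
          = (x • v + y • (M *ᵥ v)) - (x' • v + y' • (M *ᵥ v)) by abel, h]
      abel
  -- base case
  have hbase : α 1 = -(b:ℝ)/(c:ℝ) ∧ β 1 = -1/(c:ℝ) := by
    have h := hαβ 1 le_rfl
    rw [pow_one, hMinvV] at h
    exact huniq _ _ _ _ h.symm
  -- recurrence
  have hrec : ∀ i, 1 ≤ i → α (i+1) = β i + (-(b:ℝ)/(c:ℝ)) * α i ∧
      β (i+1) = (-1/(c:ℝ)) * α i := by
    intro i hi
    have h1 := hαβ i hi
    have h2' := hαβ (i+1) (by omega)
    have hstep : (M⁻¹ ^ (i+1)) *ᵥ v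
        = (β i + (-(b:ℝ)/(c:ℝ)) * α i) • v + ((-1/(c:ℝ)) * α i) • (M *ᵥ v) := by
      rw [pow_succ', ← Matrix.mulVec_mulVec, h1, Matrix.mulVec_add, Matrix.mulVec_smul,
        Matrix.mulVec_smul, hMinvV, hMinvMV]
      module
    rw [hstep] at h2'
    exact ⟨(huniq _ _ _ _ h2').1.symm, (huniq _ _ _ _ h2').2.symm⟩
  -- gap bound from expandingness
  have hgap : (0:ℝ) < -(c:ℝ) - |(b:ℝ)| - 1 := gap_lemma A b c hchar hexp hΔ hc
  -- apply the sequence lemma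
  have key := seq_key (b:ℝ) (-(c:ℝ)) (by linarith) hgap
    (fun i => α (i+1)) (fun i => β (i+1))
    (by simpa [div_neg, neg_div] using hbase.1)
    (by simpa [div_neg, neg_div] using hbase.2)
    (fun i => by
      have h := (hrec (i+1) (by omega)).1
      show α (i+1+1) = β (i+1) + ((b:ℝ)/(-(c:ℝ))) * α (i+1)
      rw [h, show (b:ℝ)/(-(c:ℝ)) = -(b:ℝ)/(c:ℝ) by rw [div_neg, neg_div]])
    (fun i => by
      have h := (hrec (i+1) (by omega)).2
      show β (i+1+1) = α (i+1) / (-(c:ℝ))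
      rw [h, show (α (i+1))/(-(c:ℝ)) = (-1/(c:ℝ)) * α (i+1) by rw [div_neg]; ring])
  have habs_c : |(c:ℝ)| = -(c:ℝ) := abs_of_neg hcr
  have hval1 : ((((|b| : ℤ) + 1 : ℤ)):ℝ) / (((|c| - |b| - 1 : ℤ)):ℝ)
      = (|(b:ℝ)|+1)/(-(c:ℝ)-|(b:ℝ)|-1) := by
    push_cast [Int.cast_abs]
    rw [habs_c]
  have hval2 : (1:ℝ) / (((|c| - |b| - 1 : ℤ)):ℝ) = 1/(-(c:ℝ)-|(b:ℝ)|-1) := by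
    push_cast [Int.cast_abs]
    rw [habs_c]
  rw [hval1, hval2]
  exact key
end

section
/- Let A be a 2×2 real matrix with characteristic polynomial x² − 4x + 4 (so A is invertible and both eigenvalues equal 2). Then the series Σ_{i=3}^∞ A^{−i} converges (the family (A^{−i})_{i≥3} is summable in the space of 2×2 real matrices) and I = 2A^{−1} + 2A^{−2} − 2·Σ_{i=3}^∞ A^{−i}, where I is the 2×2 identity matrix. -/
open Matrix Polynomial

/-- Let `A` be a `2×2` real matrix with characteristic polynomial
`x² - 4x + 4`.  Then the series `Σ_{i=3}^∞ A⁻ⁱ` converges and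
`I = 2A⁻¹ + 2A⁻² - 2·Σ_{i=3}^∞ A⁻ⁱ`. -/
theorem stmt16 (A : Matrix (Fin 2) (Fin 2) ℝ)
    (hchar : A.charpoly = X ^ 2 - C 4 * X + C 4) :
    Summable (fun i : ℕ => A⁻¹ ^ (i + 3)) ∧
      (1 : Matrix (Fin 2) (Fin 2) ℝ)
        = (2 : ℝ) • A⁻¹ + (2 : ℝ) • A⁻¹ ^ 2 - (2 : ℝ) • ∑' i : ℕ, A⁻¹ ^ (i + 3) := by
  -- Cayley–Hamilton
  have hCH : A ^ 2 - (4 : ℝ) • A + (4 : ℝ) • (1 : Matrix (Fin 2) (Fin 2) ℝ) = 0 := by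
    have h := Matrix.aeval_self_charpoly A
    rw [hchar] at h
    simpa [map_add, map_sub, _root_.map_mul, aeval_X, aeval_C, Algebra.algebraMap_eq_smul_one]
      using h
  have hA2 : A ^ 2 = (4 : ℝ) • A - (4 : ℝ) • (1 : Matrix (Fin 2) (Fin 2) ℝ) := by
    have := hCH
    rw [sub_add_eq_add_sub, sub_eq_zero] at this
    linear_combination (norm := module) this
  set N : Matrix (Fin 2) (Fin 2) ℝ := 1 - (2⁻¹ : ℝ) • A with hNdef
  have hN2 : N * N = 0 := by
    have : N * N = 1 - A + (4⁻¹ : ℝ) • A ^ 2 := by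
      rw [hNdef]
      simp only [mul_sub, sub_mul, one_mul, mul_one, Matrix.smul_mul, Matrix.mul_smul,
        smul_smul]
      rw [show A * A = A ^ 2 from (pow_two A).symm]
      module
    rw [this, hA2]
    module
  have hinv : A⁻¹ = (2⁻¹ : ℝ) • (1 + N) := by
    apply Matrix.inv_eq_right_inv
    have : A * ((2⁻¹ : ℝ) • (1 + N)) = A - (4⁻¹ : ℝ) • A ^ 2 := by
      rw [hNdef]
      simp only [mul_add, mul_sub, mul_one, Matrix.mul_smul, smul_smul]
      rw [show A * A = A ^ 2 from (pow_two A).symm]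
      module
    rw [this, hA2]
    module
  have hpow : ∀ k : ℕ, (1 + N) ^ k = 1 + (k : ℝ) • N := by
    intro k
    induction k with
    | zero => simp
    | succ k ih =>
      rw [pow_succ, ih]
      simp only [mul_add, add_mul, one_mul, mul_one, Matrix.smul_mul, hN2, smul_zero]
      push_cast
      module
  have hBpow : ∀ i : ℕ, A⁻¹ ^ (i + 3)
      = ((2 : ℝ)⁻¹ ^ (i + 3)) • (1 : Matrix (Fin 2) (Fin 2) ℝ)
        + (((i : ℝ) + 3) * (2 : ℝ)⁻¹ ^ (i + 3)) • N := by
    intro i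
    rw [hinv, _root_.smul_pow, hpow]
    push_cast
    module
  -- summability of the two scalar families
  have hgeo : Summable fun i : ℕ => (2 : ℝ)⁻¹ ^ (i + 3) :=
    (summable_nat_add_iff 3).2 (summable_geometric_of_lt_one (by norm_num) (by norm_num))
  have hlin : Summable fun i : ℕ => ((i : ℝ) + 3) * (2 : ℝ)⁻¹ ^ (i + 3) := by
    have h0 : Summable fun n : ℕ => (n : ℝ) * (2 : ℝ)⁻¹ ^ n := by
      simpa using summable_pow_mul_geometric_of_norm_lt_one (R := ℝ) 1
        (r := (2 : ℝ)⁻¹) (by norm_num)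
    have := (summable_nat_add_iff 3).2 h0
    refine this.congr fun i => ?_
    push_cast
    ring
  have hs1 := hgeo.smul_const (1 : Matrix (Fin 2) (Fin 2) ℝ)
  have hs2 := hlin.smul_const N
  have hsum : Summable (fun i : ℕ => A⁻¹ ^ (i + 3)) :=
    (hs1.add hs2).congr fun i => (hBpow i).symm
  refine ⟨hsum, ?_⟩
  -- compute the two scalar sums
  have t1 : ∑' i : ℕ, (2 : ℝ)⁻¹ ^ (i + 3) = 4⁻¹ := by
    have : (fun i : ℕ => (2 : ℝ)⁻¹ ^ (i + 3)) = fun i : ℕ => (2 : ℝ)⁻¹ ^ i * 8⁻¹ := by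
      funext i; rw [pow_add]; norm_num
    rw [this, tsum_mul_right, tsum_geometric_of_lt_one (by norm_num) (by norm_num)]
    norm_num
  have t2 : ∑' i : ℕ, ((i : ℝ) + 3) * (2 : ℝ)⁻¹ ^ (i + 3) = 1 := by
    have hf : Summable fun n : ℕ => (n : ℝ) * (2 : ℝ)⁻¹ ^ n := by
      simpa using summable_pow_mul_geometric_of_norm_lt_one (R := ℝ) 1
        (r := (2 : ℝ)⁻¹) (by norm_num)
    have h := Summable.sum_add_tsum_nat_add (f := fun n : ℕ => (n : ℝ) * (2 : ℝ)⁻¹ ^ n) 3 hf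
    have htot : ∑' n : ℕ, (n : ℝ) * (2 : ℝ)⁻¹ ^ n = 2 := by
      rw [tsum_coe_mul_geometric_of_norm_lt_one (r := (2 : ℝ)⁻¹) (by rw [Real.norm_eq_abs]; rw [abs_of_pos] <;> norm_num)]
      norm_num
    rw [htot] at h
    have hrange : ∑ i ∈ Finset.range 3, (i : ℝ) * (2 : ℝ)⁻¹ ^ i = 1 := by
      norm_num [Finset.sum_range_succ]
    rw [hrange] at h
    have := h
    have heq : (fun i : ℕ => (((i : ℕ) + 3 : ℕ) : ℝ) * (2 : ℝ)⁻¹ ^ (i + 3))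
        = fun i : ℕ => ((i : ℝ) + 3) * (2 : ℝ)⁻¹ ^ (i + 3) := by
      funext i; push_cast; ring
    rw [heq] at this
    linarith
  have htsum : ∑' i : ℕ, A⁻¹ ^ (i + 3)
      = (4⁻¹ : ℝ) • (1 : Matrix (Fin 2) (Fin 2) ℝ) + (1 : ℝ) • N := by
    calc ∑' i : ℕ, A⁻¹ ^ (i + 3)
        = ∑' i : ℕ, (((2 : ℝ)⁻¹ ^ (i + 3)) • (1 : Matrix (Fin 2) (Fin 2) ℝ)
            + (((i : ℝ) + 3) * (2 : ℝ)⁻¹ ^ (i + 3)) • N) := by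
          exact tsum_congr hBpow
      _ = (∑' i : ℕ, (2 : ℝ)⁻¹ ^ (i + 3)) • (1 : Matrix (Fin 2) (Fin 2) ℝ)
            + (∑' i : ℕ, ((i : ℝ) + 3) * (2 : ℝ)⁻¹ ^ (i + 3)) • N := by
          rw [Summable.tsum_add hs1 hs2, Summable.tsum_smul_const hgeo, Summable.tsum_smul_const hlin]
      _ = (4⁻¹ : ℝ) • (1 : Matrix (Fin 2) (Fin 2) ℝ) + (1 : ℝ) • N := by
          rw [t1, t2]
  rw [htsum, hinv, _root_.smul_pow, hpow]
  push_cast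
  module
end

section
/- Let A be an expanding 2×2 real matrix (all complex eigenvalues of A have modulus strictly greater than 1) satisfying A² + bA + cI = 0 where b, c are integers with b < 0 and c > 0. Then the series Σ_{i=2}^∞ A^{−i} converges and I = (−b − 1)·A^{−1} − (c + b + 1)·Σ_{i=2}^∞ A^{−i}, where I is the 2×2 identity matrix. -/
open Matrix Polynomial

attribute [local instance] Matrix.linftyOpNormedRing Matrix.linftyOpNormedAlgebra

private lemma two_step {Q : ℕ → Prop} (h0 : Q 0) (h1 : Q 1)
    (h : ∀ n, Q n → Q (n + 1) → Q (n + 2)) : ∀ n, Q n := by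
  have key : ∀ n, Q n ∧ Q (n + 1) := by
    intro n
    induction n with
    | zero => exact ⟨h0, h1⟩
    | succ k ih => exact ⟨ih.2, h k ih.1 ih.2⟩
  exact fun n => (key n).1

private noncomputable def pseq (t d : ℝ) : ℕ → ℝ
  | 0 => 0
  | 1 => 1
  | (n + 2) => t * pseq t d (n + 1) - d * pseq t d n

private noncomputable def qseq (t d : ℝ) : ℕ → ℝ
  | 0 => 1
  | (n + 1) => -d * pseq t d n

set_option maxHeartbeats 1000000 in
/-- Let `A` be an expanding `2×2` real matrix with
`A² + bA + cI = 0`, where `b, c` are integers with `b < 0` and `c > 0`.  Then the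
series `Σ_{i=2}^∞ A⁻ⁱ` converges and `I = (-b - 1)·A⁻¹ - (c + b + 1)·Σ_{i=2}^∞ A⁻ⁱ`. -/
theorem stmt17 (A : Matrix (Fin 2) (Fin 2) ℝ)
    (hexp : ∀ z : ℂ, (A.charpoly.map (algebraMap ℝ ℂ)).IsRoot z → 1 < ‖z‖)
    (b c : ℤ) (hb : b < 0) (hc : 0 < c)
    (hCH : A ^ 2 + (b : ℝ) • A + (c : ℝ) • (1 : Matrix (Fin 2) (Fin 2) ℝ) = 0) :
    Summable (fun i : ℕ => A⁻¹ ^ (i + 2)) ∧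
      (1 : Matrix (Fin 2) (Fin 2) ℝ)
        = ((-b - 1 : ℤ) : ℝ) • A⁻¹ - ((c + b + 1 : ℤ) : ℝ) • ∑' i : ℕ, A⁻¹ ^ (i + 2) := by
  set t : ℝ := trace A with ht
  set d : ℝ := det A with hd
  -- characteristic polynomial
  have hchar : A.charpoly = X ^ 2 - C t * X + C d := by
    rw [Matrix.charpoly, Matrix.det_fin_two, ht, hd, Matrix.trace_fin_two, Matrix.det_fin_two]
    simp [charmatrix_apply_eq, charmatrix_apply_ne, Matrix.charmatrix]
    ring
  -- complex roots via quadratic formula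
  obtain ⟨s, hs⟩ : ∃ s : ℂ, s ^ 2 = (t : ℂ) ^ 2 - 4 * (d : ℂ) :=
    IsAlgClosed.exists_pow_nat_eq _ zero_lt_two
  set z₁ : ℂ := ((t : ℂ) + s) / 2 with hz₁def
  set z₂ : ℂ := ((t : ℂ) - s) / 2 with hz₂def
  have hzsum : z₁ + z₂ = (t : ℂ) := by rw [hz₁def, hz₂def]; ring
  have hzmul : z₁ * z₂ = (d : ℂ) := by rw [hz₁def, hz₂def]; linear_combination (-1/4 : ℂ) * hs
  have hroot : ∀ z : ℂ, z ^ 2 - (t : ℂ) * z + (d : ℂ) = 0 →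
      (A.charpoly.map (algebraMap ℝ ℂ)).IsRoot z := by
    intro z hz
    rw [hchar]
    simp only [Polynomial.map_add, Polynomial.map_sub, Polynomial.map_pow, Polynomial.map_mul,
      Polynomial.map_X, Polynomial.map_C, IsRoot.def, eval_add, eval_sub, eval_pow, eval_mul,
      eval_X, eval_C, Complex.coe_algebraMap]
    exact hz
  have habs₁ : 1 < ‖z₁‖ :=
    hexp z₁ (hroot z₁ (by rw [hz₁def]; linear_combination (1/4 : ℂ) * hs))
  have habs₂ : 1 < ‖z₂‖ :=
    hexp z₂ (hroot z₂ (by rw [hz₂def]; linear_combination (1/4 : ℂ) * hs))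
  have hz₁0 : z₁ ≠ 0 := fun h => by rw [h, norm_zero] at habs₁; linarith
  have hz₂0 : z₂ ≠ 0 := fun h => by rw [h, norm_zero] at habs₂; linarith
  have hd0 : d ≠ 0 := by
    intro h
    have h0 : z₁ * z₂ = 0 := by rw [hzmul, h]; simp
    rcases mul_eq_zero.mp h0 with h' | h' <;> [exact hz₁0 h'; exact hz₂0 h']
  have hdu : IsUnit (det A) := Ne.isUnit (by rw [← hd]; exact hd0)
  set M : Matrix (Fin 2) (Fin 2) ℝ := A⁻¹ with hM
  have hMA : M * A = 1 := Matrix.nonsing_inv_mul A hdu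
  have hAM : A * M = 1 := Matrix.mul_nonsing_inv A hdu
  -- Cayley–Hamilton
  have hCHA : A ^ 2 - t • A + d • (1 : Matrix (Fin 2) (Fin 2) ℝ) = 0 := by
    have h := Matrix.aeval_self_charpoly A
    rw [hchar] at h
    simpa [Algebra.algebraMap_eq_smul_one, sq] using h
  -- quadratic for M = A⁻¹ with coefficients t' = t/d, d' = 1/d
  set t' : ℝ := t / d with ht'
  set d' : ℝ := 1 / d with hd'
  have hM2A : M ^ 2 * A = M := by rw [sq, mul_assoc, hMA, mul_one]
  have hMMAA : M ^ 2 * A ^ 2 = 1 := by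
    rw [sq, sq, mul_assoc, ← mul_assoc M A A, hMA, one_mul, hMA]
  have hM2 : M ^ 2 = t' • M - d' • (1 : Matrix (Fin 2) (Fin 2) ℝ) := by
    have h1 : (1 : Matrix (Fin 2) (Fin 2) ℝ) - t • M + d • M ^ 2 = 0 := by
      have h0 : M ^ 2 * (A ^ 2 - t • A + d • (1 : Matrix (Fin 2) (Fin 2) ℝ)) = 0 := by
        rw [hCHA, mul_zero]
      rw [mul_add, mul_sub, mul_smul_comm, mul_smul_comm, hMMAA, hM2A, mul_one] at h0
      exact h0
    apply smul_right_injective _ hd0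
    show d • (M ^ 2) = d • (t' • M - d' • (1 : Matrix (Fin 2) (Fin 2) ℝ))
    have hgoal : d • (t' • M - d' • (1 : Matrix (Fin 2) (Fin 2) ℝ))
        = t • M - 1 := by
      rw [ht', hd', smul_sub, smul_smul, smul_smul, mul_div_cancel₀ _ hd0,
        mul_one_div, div_self hd0, one_smul]
    rw [hgoal, ← sub_eq_zero, ← h1]
    abel
  set p : ℕ → ℝ := pseq t' d' with hp
  set q : ℕ → ℝ := qseq t' d' with hq
  have hpsucc : ∀ n, p (n + 1) = t' * p n + q n := by
    intro n
    cases n with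
    | zero => simp [hp, hq, pseq, qseq]
    | succ m => simp [hp, hq, pseq, qseq]; ring
  have hrep : ∀ n, M ^ n = p n • M + q n • (1 : Matrix (Fin 2) (Fin 2) ℝ) := by
    intro n
    induction n with
    | zero => simp [hp, hq, pseq, qseq]
    | succ k ih =>
      have hq1 : q (k + 1) = -d' * p k := by simp [hq, hp, qseq]
      rw [pow_succ, ih, hpsucc k, hq1, add_mul, smul_mul_assoc, smul_mul_assoc, one_mul,
        ← sq, hM2]
      module
  -- complex eigenvalues of M = A⁻¹
  set μ₁ : ℂ := z₁⁻¹ with hμ₁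
  set μ₂ : ℂ := z₂⁻¹ with hμ₂
  have hct : (t' : ℂ) = μ₁ + μ₂ := by
    rw [ht', hμ₁, hμ₂]
    push_cast
    rw [← hzsum, ← hzmul]
    field_simp
    ring
  have hcd : (d' : ℂ) = μ₁ * μ₂ := by
    rw [hd', hμ₁, hμ₂]
    push_cast
    rw [← hzmul]
    field_simp
  have habsμ₁ : ‖μ₁‖ < 1 := by
    rw [hμ₁, norm_inv, inv_lt_one_iff₀]; right; exact habs₁
  have habsμ₂ : ‖μ₂‖ < 1 := by
    rw [hμ₂, norm_inv, inv_lt_one_iff₀]; right; exact habs₂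
  set r : ℝ := max ‖μ₁‖ ‖μ₂‖ with hr
  have hr0 : 0 ≤ r := le_trans (norm_nonneg μ₁) (le_max_left _ _)
  have hr1 : r < 1 := max_lt habsμ₁ habsμ₂
  have hrμ₁ : ‖μ₁‖ ≤ r := le_max_left _ _
  have hrμ₂ : ‖μ₂‖ ≤ r := le_max_right _ _
  -- closed form
  have hclosed : ∀ n, (p n : ℂ) * (μ₁ - μ₂) = μ₁ ^ n - μ₂ ^ n := by
    apply two_step
    · simp [hp, pseq]
    · simp [hp, pseq]
    · intro n ih1 ih2
      have hrec : p (n + 2) = t' * p (n + 1) - d' * p n := by simp [hp, pseq]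
      rw [hrec]
      push_cast
      rw [hct, hcd]
      linear_combination (μ₁ + μ₂) * ih2 - μ₁ * μ₂ * ih1
  -- bound |p (n+1)| ≤ (n+1) r^n
  have hpbound : ∀ n : ℕ, |p (n + 1)| ≤ (n + 1) * r ^ n := by
    by_cases hμ : μ₁ = μ₂
    · -- equal roots
      have hμ0 : μ₁ ≠ 0 := by rw [hμ₁]; exact inv_ne_zero hz₁0
      have hP : ∀ n, (p n : ℂ) * μ₁ = n * μ₁ ^ n := by
        apply two_step
        · simp [hp, pseq]
        · simp [hp, pseq]
        · intro n ih1 ih2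
          have hrec : p (n + 2) = t' * p (n + 1) - d' * p n := by simp [hp, pseq]
          rw [hrec]
          push_cast at ih1 ih2 ⊢
          rw [hct, hcd, ← hμ]
          linear_combination 2 * μ₁ * ih2 - μ₁ ^ 2 * ih1
      have hrr : r = ‖μ₁‖ := by rw [hr, ← hμ, max_self]
      intro n
      have habs : |p (n + 1)| * ‖μ₁‖
          = (n + 1) * ‖μ₁‖ ^ (n + 1) := by
        have h := congrArg (‖·‖) (hP (n + 1))
        rwa [norm_mul, norm_mul, norm_pow, Complex.norm_real, Real.norm_eq_abs, Complex.norm_natCast,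
          Nat.cast_add, Nat.cast_one] at h
      have hμa0 : ‖μ₁‖ ≠ 0 := by
        simpa using hμ0
      have : |p (n + 1)| = (n + 1) * ‖μ₁‖ ^ n := by
        apply mul_right_cancel₀ hμa0
        rw [habs, pow_succ]
        ring
      rw [this, hrr]
    · -- distinct roots
      have hsub : μ₁ - μ₂ ≠ 0 := sub_ne_zero.mpr hμ
      intro n
      have hsum : (p (n + 1) : ℂ) = ∑ i ∈ Finset.range (n + 1), μ₁ ^ i * μ₂ ^ (n - i) := by
        apply mul_right_cancel₀ hsub
        rw [hclosed]
        have h := geom_sum₂_mul μ₁ μ₂ (n + 1)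
        simpa using h.symm
      calc |p (n + 1)| = ‖((p (n + 1) : ℝ) : ℂ)‖ := by rw [Complex.norm_real, Real.norm_eq_abs]
        _ = ‖(∑ i ∈ Finset.range (n + 1), μ₁ ^ i * μ₂ ^ (n - i))‖ := by rw [hsum]
        _ ≤ ∑ i ∈ Finset.range (n + 1), ‖μ₁ ^ i * μ₂ ^ (n - i)‖ :=
            norm_sum_le _ _
        _ ≤ ∑ _i ∈ Finset.range (n + 1), r ^ n := by
            apply Finset.sum_le_sum
            intro i hi
            have hin : i ≤ n := Nat.lt_succ_iff.mp (Finset.mem_range.mp hi)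
            rw [norm_mul, norm_pow, norm_pow]
            calc ‖μ₁‖ ^ i * ‖μ₂‖ ^ (n - i)
                ≤ r ^ i * r ^ (n - i) := by
                  apply mul_le_mul (pow_le_pow_left₀ (norm_nonneg _) hrμ₁ i)
                    (pow_le_pow_left₀ (norm_nonneg _) hrμ₂ _)
                    (pow_nonneg (norm_nonneg _) _) (pow_nonneg hr0 _)
              _ = r ^ n := by rw [← pow_add, Nat.add_sub_cancel' hin]
        _ = (n + 1) * r ^ n := by
            rw [Finset.sum_const, Finset.card_range, nsmul_eq_mul]
            push_cast
            ring
  -- summability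
  have hqb : ∀ n : ℕ, |q (n + 2)| ≤ |d'| * ((n + 1) * r ^ n) := by
    intro n
    have : q (n + 2) = -d' * p (n + 1) := by simp [hq, hp, qseq]
    rw [this, abs_mul, abs_neg]
    exact mul_le_mul_of_nonneg_left (hpbound n) (abs_nonneg _)
  set C : ℝ := 2 * ‖M‖ + |d'| * ‖(1 : Matrix (Fin 2) (Fin 2) ℝ)‖ with hC
  have hnormb : ∀ n : ℕ, ‖M ^ (n + 2)‖ ≤ C * ((n + 1) * r ^ n) := by
    intro n
    rw [hrep (n + 2)]
    calc ‖p (n + 2) • M + q (n + 2) • (1 : Matrix (Fin 2) (Fin 2) ℝ)‖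
        ≤ ‖p (n + 2) • M‖ + ‖q (n + 2) • (1 : Matrix (Fin 2) (Fin 2) ℝ)‖ := norm_add_le _ _
      _ = |p (n + 2)| * ‖M‖ + |q (n + 2)| * ‖(1 : Matrix (Fin 2) (Fin 2) ℝ)‖ := by
          rw [norm_smul, norm_smul, Real.norm_eq_abs, Real.norm_eq_abs]
      _ ≤ C * ((n + 1) * r ^ n) := by
          have h1 : |p (n + 2)| ≤ ((n : ℝ) + 2) * r ^ (n + 1) := by
            have h := hpbound (n + 1)
            push_cast at h
            calc |p (n + 2)| = |p (n + 1 + 1)| := rfl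
              _ ≤ ((n : ℝ) + 1 + 1) * r ^ (n + 1) := h
              _ = ((n : ℝ) + 2) * r ^ (n + 1) := by ring
          have h2 : (n + 2 : ℝ) * r ^ (n + 1) ≤ 2 * ((n + 1) * r ^ n) := by
            have hrpow : r ^ (n + 1) ≤ r ^ n := pow_le_pow_of_le_one hr0 hr1.le (Nat.le_succ n)
            have hn2 : (n + 2 : ℝ) ≤ 2 * (n + 1) := by push_cast; nlinarith [Nat.cast_nonneg (α := ℝ) n]
            have hrn : (0:ℝ) ≤ r ^ n := pow_nonneg hr0 n
            nlinarith [pow_nonneg hr0 (n+1), mul_le_mul_of_nonneg_left hrpow (by positivity : (0:ℝ) ≤ (n+2:ℝ))]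
          have h3 := hqb n
          have hM0 : (0:ℝ) ≤ ‖M‖ := norm_nonneg _
          have h10 : (0:ℝ) ≤ ‖(1 : Matrix (Fin 2) (Fin 2) ℝ)‖ := norm_nonneg _
          have hp0 : (0:ℝ) ≤ |p (n+2)| := abs_nonneg _
          rw [hC]
          nlinarith [mul_le_mul_of_nonneg_right h2 hM0,
            mul_le_mul_of_nonneg_right h3 h10,
            mul_le_mul_of_nonneg_right (le_trans h1 h2) hM0]
  have hgsum : Summable (fun n : ℕ => C * ((n + 1) * r ^ n)) := by
    have h1 : Summable (fun n : ℕ => (n : ℝ) * r ^ n) := by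
      have := summable_pow_mul_geometric_of_norm_lt_one (R := ℝ) 1
        (r := r) (by rwa [Real.norm_eq_abs, abs_of_nonneg hr0])
      simpa using this
    have h2 : Summable (fun n : ℕ => r ^ n) :=
      summable_geometric_of_lt_one hr0 hr1
    have := (h1.add h2).mul_left C
    refine this.congr (fun n => ?_)
    push_cast
    ring
  have hsum : Summable (fun i : ℕ => M ^ (i + 2)) :=
    Summable.of_norm_bounded hgsum hnormb
  refine ⟨hsum, ?_⟩
  -- the tsum equation
  set S : Matrix (Fin 2) (Fin 2) ℝ := ∑' i : ℕ, M ^ (i + 2) with hS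
  have hshift : S = M ^ 2 + ∑' i : ℕ, M ^ (i + 3) := by
    rw [hS, hsum.tsum_eq_zero_add]
  have hMS : M * S = ∑' i : ℕ, M ^ (i + 3) := by
    rw [hS, ← hsum.tsum_mul_left M]
    congr 1
    funext i
    rw [← pow_succ']
  have hfactor : (1 - M) * S = M ^ 2 := by
    rw [sub_mul, one_mul, hMS, hshift]
    abel
  -- units
  have hdetA1 : det (A - 1) ≠ 0 := by
    have hA1 : det (A - 1) = d - t + 1 := by
      rw [Matrix.det_fin_two, hd, Matrix.det_fin_two, ht, Matrix.trace_fin_two]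
      simp [Matrix.sub_apply, Matrix.one_apply]
      ring
    rw [hA1]
    intro hcontra
    have hone : ((d : ℂ) - t + 1) = 0 := by
      have : ((d - t + 1 : ℝ) : ℂ) = 0 := by rw [hcontra]; simp
      push_cast at this
      exact this
    have hfac : (1 - z₁) * (1 - z₂) = 0 := by
      linear_combination hone + hzmul - hzsum
    rcases mul_eq_zero.mp hfac with h' | h'
    · have : z₁ = 1 := by linear_combination -h'
      rw [this] at habs₁; simp at habs₁
    · have : z₂ = 1 := by linear_combination -h'
      rw [this] at habs₂; simp at habs₂
  have hUM : IsUnit M := by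
    rw [Matrix.isUnit_iff_isUnit_det]
    rw [hM, Matrix.det_nonsing_inv]
    exact IsUnit.of_mul_eq_one _ (Ring.inverse_mul_cancel _ hdu)
  have hU1 : IsUnit (1 - M) := by
    have hfac : (1 : Matrix (Fin 2) (Fin 2) ℝ) - M = M * (A - 1) := by
      rw [mul_sub, hMA, mul_one]
    rw [hfac]
    exact hUM.mul (Matrix.isUnit_iff_isUnit_det _ |>.mpr (Ne.isUnit hdetA1))
  -- quadratic for M from hCH
  have hquadM : (1 : Matrix (Fin 2) (Fin 2) ℝ) + (b : ℝ) • M + (c : ℝ) • M ^ 2 = 0 := by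
    have h0 : M ^ 2 * (A ^ 2 + (b : ℝ) • A + (c : ℝ) • (1 : Matrix (Fin 2) (Fin 2) ℝ)) = 0 := by
      rw [hCH, mul_zero]
    rw [mul_add, mul_add, mul_smul_comm, mul_smul_comm, hMMAA, hM2A, mul_one] at h0
    exact h0
  -- final cancellation
  apply hU1.mul_left_cancel
  rw [mul_one, mul_sub, mul_smul_comm, mul_smul_comm, hfactor]
  have hexpand : (1 - M) * M = M - M ^ 2 := by rw [sub_mul, one_mul, sq]
  rw [hexpand]
  have h1 : (1 : Matrix (Fin 2) (Fin 2) ℝ) = -((b : ℝ) • M + (c : ℝ) • M ^ 2) :=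
    eq_neg_of_add_eq_zero_left (by rw [← add_assoc]; exact hquadM)
  conv_lhs => rw [h1]
  push_cast
  module
end

section
/- Let A be an expanding 2×2 real matrix (all complex eigenvalues of A have modulus strictly greater than 1) satisfying A² + bA + cI = 0 where b, c are integers with b < 0 and c < 0. Then the series Σ_{i=2}^∞ (−A)^{−i} converges and I = (−b + 1)·A^{−1} + (−c + b − 1)·Σ_{i=2}^∞ (−A)^{−i}, where I is the 2×2 identity matrix. -/
open Matrix Polynomial

namespace Stmt18Aux


variable {R : Type*} [CommRing R]

lemma eval_charpoly2 (M : Matrix (Fin 2) (Fin 2) R) (x : R) :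
    M.charpoly.eval x = (x • (1 : Matrix (Fin 2) (Fin 2) R) - M).det := by
  rw [Matrix.charpoly, Matrix.det_fin_two, Matrix.det_fin_two]
  simp [charmatrix_apply_eq, charmatrix_apply_ne, Matrix.smul_apply, Matrix.one_apply,
    Matrix.sub_apply]

lemma mul_self_eq (M : Matrix (Fin 2) (Fin 2) R) :
    M * M = trace M • M - det M • 1 := by
  ext i j
  fin_cases i <;> fin_cases j <;>
    simp [Matrix.mul_apply, Fin.sum_univ_two, trace_fin_two, det_fin_two, Matrix.one_apply,
      Matrix.smul_apply, Matrix.sub_apply] <;> ring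

/-- coefficients of powers: `M^n = (pq t d n).1 • M + (pq t d n).2 • 1`. -/
def pq (t d : ℝ) : ℕ → ℝ × ℝ
  | 0 => (0, 1)
  | n+1 => (t * (pq t d n).1 + (pq t d n).2, -d * (pq t d n).1)

lemma pow_eq_pq (M : Matrix (Fin 2) (Fin 2) ℝ) (n : ℕ) :
    M ^ n = (pq (trace M) (det M) n).1 • M + (pq (trace M) (det M) n).2 • 1 := by
  induction n with
  | zero => simp [pq]
  | succ n ih =>
      rw [pow_succ, ih, add_mul, smul_mul_assoc, smul_mul_assoc, one_mul, mul_self_eq, pq]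
      module

def sseq (μ₁ μ₂ : ℂ) : ℕ → ℂ
  | 0 => 0
  | n+1 => μ₁ * sseq μ₁ μ₂ n + μ₂ ^ n

lemma pq_eq_sseq (t d : ℝ) (μ₁ μ₂ : ℂ) (h1 : μ₁ + μ₂ = (t : ℂ)) (h2 : μ₁ * μ₂ = (d : ℂ)) :
    ∀ n, ((pq t d n).1 : ℂ) = sseq μ₁ μ₂ n ∧
      ((pq t d n).2 : ℂ) = μ₂ ^ n - μ₂ * sseq μ₁ μ₂ n := by
  intro n
  induction n with
  | zero => simp [pq, sseq]
  | succ n ih =>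
      obtain ⟨ih1, ih2⟩ := ih
      constructor
      · show (((t * (pq t d n).1 + (pq t d n).2 : ℝ)) : ℂ) = _
        push_cast
        rw [ih1, ih2, ← h1]
        show _ = μ₁ * sseq μ₁ μ₂ n + μ₂ ^ n
        ring
      · show (((-d * (pq t d n).1 : ℝ)) : ℂ) = _
        push_cast
        rw [ih1, ← h2]
        show _ = μ₂ ^ (n+1) - μ₂ * (μ₁ * sseq μ₁ μ₂ n + μ₂ ^ n)
        ring

lemma sseq_bound (μ₁ μ₂ : ℂ) (ρ : ℝ) (h1 : ‖μ₁‖ ≤ ρ) (h2 : ‖μ₂‖ ≤ ρ) :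
    ∀ n : ℕ, ‖(sseq μ₁ μ₂ (n+1))‖ ≤ (n+1) * ρ ^ n := by
  have hρ : 0 ≤ ρ := le_trans (norm_nonneg _) h1
  intro n
  induction n with
  | zero => simp [sseq]
  | succ n ih =>
      have step : ‖(sseq μ₁ μ₂ (n+2))‖ ≤
          ‖μ₁‖ * ‖(sseq μ₁ μ₂ (n+1))‖ + ‖(μ₂ ^ (n+1))‖ := by
        calc ‖(sseq μ₁ μ₂ (n+2))‖
            = ‖μ₁ * sseq μ₁ μ₂ (n+1) + μ₂ ^ (n+1)‖ := rfl
          _ ≤ ‖(μ₁ * sseq μ₁ μ₂ (n+1))‖ + ‖(μ₂ ^ (n+1))‖ :=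
              norm_add_le _ _
          _ = ‖μ₁‖ * ‖(sseq μ₁ μ₂ (n+1))‖ + ‖(μ₂ ^ (n+1))‖ := by
              rw [norm_mul]
      have hpow : ‖(μ₂ ^ (n+1))‖ ≤ ρ ^ (n+1) := by
        rw [norm_pow]
        exact pow_le_pow_left₀ (norm_nonneg _) h2 _
      have hmul : ‖μ₁‖ * ‖(sseq μ₁ μ₂ (n+1))‖ ≤ ρ * ((n+1) * ρ ^ n) :=
        mul_le_mul h1 ih (norm_nonneg _) hρ
      have hρpow : (0:ℝ) ≤ ρ ^ n := pow_nonneg hρ n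
      have hsucc : ρ ^ (n+1) = ρ ^ n * ρ := pow_succ ρ n
      show ‖(sseq μ₁ μ₂ (n+1+1))‖ ≤ (((n+1 : ℕ) : ℝ)+1) * ρ ^ (n+1)
      have hss : sseq μ₁ μ₂ (n+1+1) = sseq μ₁ μ₂ (n+2) := rfl
      rw [hss]
      push_cast at hmul ⊢
      nlinarith [step, hpow, hmul, hsucc, hρpow, hρ]


lemma det_map (M : Matrix (Fin 2) (Fin 2) ℝ) :
    (M.map (algebraMap ℝ ℂ)).det = (M.det : ℂ) := by
  simp [det_fin_two, Matrix.map_apply]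

lemma map_smul_one_sub (M : Matrix (Fin 2) (Fin 2) ℝ) (r : ℝ) :
    (r • (1 : Matrix (Fin 2) (Fin 2) ℝ) - M).map (algebraMap ℝ ℂ)
      = (r : ℂ) • (1 : Matrix (Fin 2) (Fin 2) ℂ) - M.map (algebraMap ℝ ℂ) := by
  ext i j
  by_cases h : i = j <;>
    simp [h, Matrix.map_apply, Matrix.one_apply, Matrix.smul_apply, Matrix.sub_apply]

section WithNorm
attribute [local instance] Matrix.linftyOpNormedRing Matrix.linftyOpNormSMulClass

lemma summable_aux (C : Matrix (Fin 2) (Fin 2) ℝ) (ρ : ℝ) (hρ0 : 0 ≤ ρ) (hρ1 : ρ < 1)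
    (hp : ∀ n : ℕ, |(pq (trace C) (det C) (n+1)).1| ≤ ((n:ℝ)+1) * ρ ^ n) :
    Summable (fun n : ℕ => C ^ (n+2)) := by
  set t := trace C with ht
  set d := det C with hd
  set K : ℝ := ρ * ‖C‖ + |d| * ‖(1 : Matrix (Fin 2) (Fin 2) ℝ)‖ with hK
  have hnorm : ∀ n : ℕ, ‖C ^ (n+2)‖ ≤ ((n:ℝ)+2) * ρ^n * K := by
    intro n
    have e := pow_eq_pq C (n+2)
    have hq2 : (pq t d (n+2)).2 = -d * (pq t d (n+1)).1 := rfl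
    have h1 : ‖C ^ (n+2)‖ ≤ |(pq t d (n+2)).1| * ‖C‖
        + |(pq t d (n+2)).2| * ‖(1 : Matrix (Fin 2) (Fin 2) ℝ)‖ := by
      rw [e]
      refine le_trans (norm_add_le _ _) ?_
      rw [norm_smul, norm_smul, Real.norm_eq_abs, Real.norm_eq_abs]
    have hb1 : |(pq t d (n+2)).1| ≤ ((n:ℝ)+2) * ρ^(n+1) := by
      have := hp (n+1)
      push_cast at this
      linarith
    have hb2 : |(pq t d (n+2)).2| ≤ |d| * (((n:ℝ)+1) * ρ^n) := by
      rw [hq2, abs_mul, abs_neg]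
      exact mul_le_mul_of_nonneg_left (hp n) (abs_nonneg d)
    have hCn : (0:ℝ) ≤ ‖C‖ := norm_nonneg _
    have h1n : (0:ℝ) ≤ ‖(1 : Matrix (Fin 2) (Fin 2) ℝ)‖ := norm_nonneg _
    have hpn : (0:ℝ) ≤ ρ^n := pow_nonneg hρ0 n
    have hps : ρ^(n+1) = ρ^n * ρ := pow_succ ρ n
    have A1 := mul_le_mul_of_nonneg_right hb1 hCn
    have A2 := mul_le_mul_of_nonneg_right hb2 h1n
    calc ‖C ^ (n+2)‖ ≤ |(pq t d (n + 2)).1| * ‖C‖ + |(pq t d (n + 2)).2| * ‖(1 : Matrix (Fin 2) (Fin 2) ℝ)‖ := h1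
      _ ≤ (((n:ℝ)+2) * ρ^(n+1)) * ‖C‖ + (|d| * (((n:ℝ)+1) * ρ^n)) * ‖(1 : Matrix (Fin 2) (Fin 2) ℝ)‖ := add_le_add A1 A2
      _ ≤ ((n:ℝ)+2) * ρ^n * K := by
          rw [hK, hps]
          nlinarith [mul_nonneg (mul_nonneg (abs_nonneg d) hpn) h1n]
  have h1 : Summable (fun n : ℕ => (n:ℝ) * ρ^n) := by
    have := summable_pow_mul_geometric_of_norm_lt_one (R := ℝ) 1
      (r := ρ) (by rwa [Real.norm_eq_abs, abs_of_nonneg hρ0])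
    simpa using this
  have h2 : Summable (fun n : ℕ => ρ^n) := summable_geometric_of_lt_one hρ0 hρ1
  have h3 : Summable (fun n : ℕ => ((n:ℝ)+2) * ρ^n * K) := by
    have h4 := ((h1.add (h2.mul_left 2)).mul_right K)
    refine h4.congr fun n => ?_
    ring
  letI : NormedSpace ℝ (Matrix (Fin 2) (Fin 2) ℝ) := Matrix.linftyOpNormedSpace
  haveI := FiniteDimensional.complete ℝ (Matrix (Fin 2) (Fin 2) ℝ)
  exact Summable.of_norm_bounded h3 hnorm

end WithNorm

end Stmt18Aux

open Stmt18Aux Filter in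
/-- Let `A` be an expanding `2×2` real matrix with
`A² + bA + cI = 0`, where `b, c` are integers with `b < 0` and `c < 0`.  Then the
series `Σ_{i=2}^∞ (-A)⁻ⁱ` converges and
`I = (-b + 1)·A⁻¹ + (-c + b - 1)·Σ_{i=2}^∞ (-A)⁻ⁱ`. -/
theorem stmt18 (A : Matrix (Fin 2) (Fin 2) ℝ)
    (hexp : ∀ z : ℂ, (A.charpoly.map (algebraMap ℝ ℂ)).IsRoot z → 1 < ‖z‖)
    (b c : ℤ) (hb : b < 0) (hc : c < 0)
    (hCH : A ^ 2 + (b : ℝ) • A + (c : ℝ) • (1 : Matrix (Fin 2) (Fin 2) ℝ) = 0) :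
    Summable (fun i : ℕ => (-A)⁻¹ ^ (i + 2)) ∧
      (1 : Matrix (Fin 2) (Fin 2) ℝ)
        = ((-b + 1 : ℤ) : ℝ) • A⁻¹ + ((-c + b - 1 : ℤ) : ℝ) • ∑' i : ℕ, (-A)⁻¹ ^ (i + 2) := by
  classical
  have hroot : ∀ x : ℂ,
      (x • (1 : Matrix (Fin 2) (Fin 2) ℂ) - A.map (algebraMap ℝ ℂ)).det = 0 →
      1 < ‖x‖ := by
    intro x hx
    apply hexp
    show (A.charpoly.map (algebraMap ℝ ℂ)).eval x = 0
    rw [← Matrix.charpoly_map A (algebraMap ℝ ℂ), Stmt18Aux.eval_charpoly2]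
    exact hx
  have hdetA : A.det ≠ 0 := by
    intro h
    have h0 : ((0:ℂ) • (1 : Matrix (Fin 2) (Fin 2) ℂ) - A.map (algebraMap ℝ ℂ)).det = 0 := by
      rw [show (0:ℂ) = ((0:ℝ):ℂ) by norm_num, ← Stmt18Aux.map_smul_one_sub A 0,
        Stmt18Aux.det_map, zero_smul, zero_sub,
        Matrix.det_neg, Fintype.card_fin, h]
      norm_num
    have h1 := hroot 0 h0
    rw [norm_zero] at h1
    exact absurd h1 (by norm_num)
  have hdet1A : (1 + A).det ≠ 0 := by
    intro h
    have h0 : ((-1:ℂ) • (1 : Matrix (Fin 2) (Fin 2) ℂ) - A.map (algebraMap ℝ ℂ)).det = 0 := by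
      have e0 : (((-1:ℝ)):ℂ) = (-1:ℂ) := by norm_num
      rw [← e0, ← Stmt18Aux.map_smul_one_sub A (-1), Stmt18Aux.det_map]
      have e1 : (-1:ℝ) • (1 : Matrix (Fin 2) (Fin 2) ℝ) - A = -(1 + A) := by module
      rw [e1, Matrix.det_neg, Fintype.card_fin, h]
      norm_num
    have h1 := hroot (-1) h0
    rw [norm_neg, norm_one] at h1
    exact absurd h1 (by norm_num)
  set B : Matrix (Fin 2) (Fin 2) ℝ := -A with hB
  have hdetB : B.det ≠ 0 := by
    rw [hB, Matrix.det_neg]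
    simpa using hdetA
  have hBu : IsUnit B.det := isUnit_iff_ne_zero.mpr hdetB
  set C : Matrix (Fin 2) (Fin 2) ℝ := B⁻¹ with hC
  have hBC : B * C = 1 := Matrix.mul_nonsing_inv B hBu
  have hCB : C * B = 1 := Matrix.nonsing_inv_mul B hBu
  have hB2 : B * B = (b:ℝ) • B - (c:ℝ) • 1 := by
    have h1 : B * B = A ^ 2 := by rw [hB, neg_mul_neg, sq]
    have hCH' : A ^ 2 + ((b:ℝ) • A + (c:ℝ) • (1 : Matrix (Fin 2) (Fin 2) ℝ)) = 0 := by
      rw [← add_assoc]; exact hCH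
    have h2 : A ^ 2 = -((b:ℝ) • A + (c:ℝ) • (1 : Matrix (Fin 2) (Fin 2) ℝ)) :=
      eq_neg_of_add_eq_zero_left hCH'
    rw [h1, h2, hB]
    module
  set E : Matrix (Fin 2) (Fin 2) ℝ := B * B - B with hE
  have hdetE : E.det ≠ 0 := by
    have e1 : E = B * (B - 1) := by rw [hE, mul_sub, mul_one]
    have e2 : B - 1 = -(1 + A) := by rw [hB]; abel
    rw [e1, Matrix.det_mul, e2, Matrix.det_neg (1 + A), Fintype.card_fin]
    have e3 : ((-1:ℝ))^2 = 1 := by norm_num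
    rw [e3, one_mul]
    exact mul_ne_zero hdetB hdet1A
  have hEu : IsUnit E.det := isUnit_iff_ne_zero.mpr hdetE
  set D : Matrix (Fin 2) (Fin 2) ℝ := E⁻¹ with hD
  have hED : E * D = 1 := Matrix.mul_nonsing_inv E hEu
  have hDE : D * E = 1 := Matrix.nonsing_inv_mul E hEu
  set t : ℝ := trace C with ht
  set d : ℝ := det C with hd
  have hd0 : d ≠ 0 := by
    have h1 := Matrix.det_mul C B
    rw [hCB, Matrix.det_one] at h1
    intro h
    rw [hd] at h
    rw [h, zero_mul] at h1
    exact one_ne_zero h1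
  -- complex roots of X² - tX + d
  obtain ⟨μ₁, hμ₁⟩ : ∃ μ : ℂ, μ^2 - (t:ℂ) * μ + (d:ℂ) = 0 := by
    have hdeg : (Polynomial.C (1:ℂ) * Polynomial.X ^ 2 + Polynomial.C (-(t:ℂ)) * Polynomial.X
        + Polynomial.C (d:ℂ)).degree ≠ 0 := by
      rw [Polynomial.degree_quadratic one_ne_zero]
      decide
    obtain ⟨z, hz⟩ := IsAlgClosed.exists_root _ hdeg
    refine ⟨z, ?_⟩
    have hz' := hz
    simp only [Polynomial.IsRoot, Polynomial.eval_add, Polynomial.eval_mul, Polynomial.eval_pow,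
      Polynomial.eval_C, Polynomial.eval_X, one_mul] at hz'
    linear_combination hz'
  set μ₂ : ℂ := (t:ℂ) - μ₁ with hμ₂def
  have hsum : μ₁ + μ₂ = (t:ℂ) := by rw [hμ₂def]; ring
  have hprod : μ₁ * μ₂ = (d:ℂ) := by rw [hμ₂def]; linear_combination -hμ₁
  have hμ₂root : μ₂^2 - (t:ℂ) * μ₂ + (d:ℂ) = 0 := by rw [hμ₂def]; linear_combination hμ₁
  -- all such roots have modulus < 1
  have habs : ∀ μ : ℂ, μ^2 - (t:ℂ) * μ + (d:ℂ) = 0 → ‖μ‖ < 1 := by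
    intro μ hμ
    have hd0' : (d:ℂ) ≠ 0 := Complex.ofReal_ne_zero.mpr hd0
    have hμ0 : μ ≠ 0 := by
      rintro rfl
      simp at hμ
      exact hd0 (by exact_mod_cast hμ)
    have htr : trace (C.map (algebraMap ℝ ℂ)) = (t:ℂ) := by
      rw [ht]
      simp [trace_fin_two, Matrix.map_apply]
    have hdetc : det (C.map (algebraMap ℝ ℂ)) = (d:ℂ) := by
      rw [Stmt18Aux.det_map, ← hd]
    have h1 : det (μ • (1 : Matrix (Fin 2) (Fin 2) ℂ) - C.map (algebraMap ℝ ℂ)) = 0 := by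
      have hdet2 : det (μ • (1 : Matrix (Fin 2) (Fin 2) ℂ) - C.map (algebraMap ℝ ℂ))
          = μ^2 - trace (C.map (algebraMap ℝ ℂ)) * μ + det (C.map (algebraMap ℝ ℂ)) := by
        simp [det_fin_two, trace_fin_two, Matrix.smul_apply, Matrix.one_apply, Matrix.sub_apply]
        ring
      rw [hdet2, htr, hdetc]
      exact hμ
    have hCBc : C.map (algebraMap ℝ ℂ) * B.map (algebraMap ℝ ℂ) = 1 := by
      rw [← Matrix.map_mul, hCB, Matrix.map_one _ (map_zero _) (map_one _)]
    have h2 : det (μ • B.map (algebraMap ℝ ℂ) - 1) = 0 := by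
      have e : (μ • (1 : Matrix (Fin 2) (Fin 2) ℂ) - C.map (algebraMap ℝ ℂ))
          * B.map (algebraMap ℝ ℂ) = μ • B.map (algebraMap ℝ ℂ) - 1 := by
        rw [sub_mul, smul_mul_assoc, one_mul, hCBc]
      rw [← e, Matrix.det_mul, h1, zero_mul]
    have h3 : det (B.map (algebraMap ℝ ℂ) - μ⁻¹ • (1 : Matrix (Fin 2) (Fin 2) ℂ)) = 0 := by
      have e : μ • (B.map (algebraMap ℝ ℂ) - μ⁻¹ • (1 : Matrix (Fin 2) (Fin 2) ℂ))
          = μ • B.map (algebraMap ℝ ℂ) - 1 := by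
        rw [smul_sub, smul_smul, mul_inv_cancel₀ hμ0, one_smul]
      have hds := Matrix.det_smul (B.map (algebraMap ℝ ℂ) - μ⁻¹ • (1 : Matrix (Fin 2) (Fin 2) ℂ)) μ
      rw [e, h2] at hds
      simp only [Fintype.card_fin] at hds
      rcases mul_eq_zero.mp hds.symm with h | h
      · exact absurd h (pow_ne_zero _ hμ0)
      · exact h
    have hBcneg : B.map (algebraMap ℝ ℂ) = -(A.map (algebraMap ℝ ℂ)) := by
      rw [hB]
      ext i j
      simp [Matrix.map_apply]
    have h4 : det ((-μ⁻¹) • (1 : Matrix (Fin 2) (Fin 2) ℂ) - A.map (algebraMap ℝ ℂ)) = 0 := by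
      have e : (-μ⁻¹) • (1 : Matrix (Fin 2) (Fin 2) ℂ) - A.map (algebraMap ℝ ℂ)
          = B.map (algebraMap ℝ ℂ) - μ⁻¹ • (1 : Matrix (Fin 2) (Fin 2) ℂ) := by
        rw [hBcneg]
        module
      rw [e, h3]
    have h5 := hroot (-μ⁻¹) h4
    rw [norm_neg, norm_inv] at h5
    have hpos : 0 < ‖μ‖ := norm_pos_iff.mpr hμ0
    by_contra hcon
    push_neg at hcon
    have : ‖μ‖⁻¹ ≤ 1 := inv_le_one_of_one_le₀ hcon
    linarith
  have hμ1lt := habs μ₁ hμ₁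
  have hμ2lt := habs μ₂ hμ₂root
  set ρ : ℝ := max (‖μ₁‖) (‖μ₂‖) with hρ
  have hρ0 : 0 ≤ ρ := le_trans (norm_nonneg μ₁) (le_max_left _ _)
  have hρ1 : ρ < 1 := max_lt hμ1lt hμ2lt
  -- bound on coefficients
  have hps := Stmt18Aux.pq_eq_sseq t d μ₁ μ₂ hsum hprod
  have hsb := Stmt18Aux.sseq_bound μ₁ μ₂ ρ (le_max_left _ _) (le_max_right _ _)
  have hp_bound : ∀ n : ℕ, |(pq t d (n+1)).1| ≤ ((n:ℝ)+1) * ρ^n := by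
    intro n
    have h1 : ((pq t d (n+1)).1 : ℂ) = sseq μ₁ μ₂ (n+1) := (hps (n+1)).1
    have h2 : |(pq t d (n+1)).1| = ‖(sseq μ₁ μ₂ (n+1))‖ := by
      rw [← h1, Complex.norm_real, Real.norm_eq_abs]
    rw [h2]
    exact_mod_cast hsb n
  have hsummable : Summable (fun n : ℕ => C ^ (n+2)) := by
    refine Stmt18Aux.summable_aux C ρ hρ0 hρ1 ?_
    rw [← ht, ← hd]
    exact hp_bound
  -- partial sums and limit
  have htend2 : Tendsto (fun n : ℕ => C ^ (n+2)) atTop (nhds 0) := hsummable.tendsto_atTop_zero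
  have htend : Tendsto (fun n : ℕ => C ^ n) atTop (nhds 0) :=
    (tendsto_add_atTop_iff_nat 2).mp htend2
  have hcomB : C * B = B * C := hCB.trans hBC.symm
  have hcomE : Commute C E := by
    rw [hE]
    exact (Commute.mul_right hcomB hcomB).sub_right hcomB
  have hEC2 : E * (C * C) = 1 - C := by
    rw [hE, sub_mul]
    have h1 : B * B * (C * C) = 1 := by
      rw [mul_assoc, ← mul_assoc B C C, hBC, one_mul, hBC]
    have h2 : B * (C * C) = C := by rw [← mul_assoc, hBC, one_mul]
    rw [h1, h2]
  have hPS : ∀ N : ℕ, ∑ n ∈ Finset.range N, C ^ (n+2) = D - D * C ^ N := by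
    intro N
    have hterm : ∀ n : ℕ, E * C ^ (n+2) = C ^ n - C ^ (n+1) := by
      intro n
      have hc : C ^ (n+2) = C ^ n * (C * C) := by rw [pow_add, sq]
      rw [hc, ← mul_assoc, ← (hcomE.pow_left n).eq, mul_assoc, hEC2, mul_sub, mul_one,
        ← pow_succ]
    have hsum1 : E * ∑ n ∈ Finset.range N, C ^ (n+2) = 1 - C ^ N := by
      rw [Finset.mul_sum]
      have : ∀ n ∈ Finset.range N, E * C ^ (n+2) = C ^ n - C ^ (n+1) := fun n _ => hterm n
      rw [Finset.sum_congr rfl this, Finset.sum_range_sub' (fun n => C ^ n), pow_zero]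
    calc ∑ n ∈ Finset.range N, C ^ (n+2)
        = (D * E) * ∑ n ∈ Finset.range N, C ^ (n+2) := by rw [hDE, one_mul]
      _ = D * (E * ∑ n ∈ Finset.range N, C ^ (n+2)) := by rw [mul_assoc]
      _ = D * (1 - C ^ N) := by rw [hsum1]
      _ = D - D * C ^ N := by rw [mul_sub, mul_one]
  have htsum : ∑' n : ℕ, C ^ (n+2) = D := by
    have h1 : Tendsto (fun N => ∑ n ∈ Finset.range N, C ^ (n+2)) atTop
        (nhds (∑' n : ℕ, C ^ (n+2))) := hsummable.hasSum.tendsto_sum_nat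
    have h2 : Tendsto (fun N => ∑ n ∈ Finset.range N, C ^ (n+2)) atTop (nhds D) := by
      have e : (fun N => ∑ n ∈ Finset.range N, C ^ (n+2)) = fun N => D - D * C ^ N :=
        funext hPS
      rw [e]
      have h3 : Tendsto (fun N : ℕ => D - D * C ^ N) atTop (nhds (D - D * 0)) :=
        tendsto_const_nhds.sub (htend.const_mul D)
      simpa using h3
    exact tendsto_nhds_unique h1 h2
  refine ⟨hsummable, ?_⟩
  rw [htsum]
  have hAinv : A⁻¹ = -C := by
    apply Matrix.inv_eq_right_inv
    rw [mul_neg, ← neg_mul, ← hB, hBC]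
  rw [hAinv]
  have hCE : C * E = B - 1 := by
    rw [hE, mul_sub, ← mul_assoc, hCB, one_mul]
  have key : (((-b + 1 : ℤ) : ℝ) • (-C) + ((-c + b - 1 : ℤ) : ℝ) • D) * E = 1 * E := by
    rw [one_mul, add_mul, smul_mul_assoc, smul_mul_assoc, neg_mul, hCE, hDE, hE, hB2]
    push_cast
    module
  have hcancel := congrArg (fun X => X * D) key
  simp only [mul_assoc, hED, mul_one] at hcancel
  exact hcancel.symm
end

section
/- Suppose b < 0 is divisible by 3 with b ≤ −3, and c = b²/3 (so Δ = b² − 4c < 0 and A is expanding since c ≥ 3). Then the series Σ_{i=1}^∞ |α_i| converges and Σ_{i=1}^∞ |α_i| = (3|b|⁵ + 6b⁴ + 9|b|³ + 9b² + 27)/(b⁶ − 27). -/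
open Matrix Polynomial

set_option maxHeartbeats 2000000 in
/-- If `b < 0` is divisible by `3` with `b ≤ -3` and `c = b²/3`, then
`Σ_{i≥1} |αᵢ|` converges with sum `(3|b|⁵ + 6b⁴ + 9|b|³ + 9b² + 27)/(b⁶ - 27)`. -/
theorem stmt19 (A : Matrix (Fin 2) (Fin 2) ℤ) (b c : ℤ)
    (hchar : A.charpoly = X ^ 2 + C b * X + C c)
    (hexp : ∀ z : ℂ, (A.charpoly.map (Int.castRingHom ℂ)).IsRoot z → 1 < ‖z‖)
    (v : Fin 2 → ℝ)
    (hv : LinearIndependent ℝ ![v, (A.map (Int.cast : ℤ → ℝ)) *ᵥ v])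
    (α β : ℕ → ℝ)
    (hαβ : ∀ i : ℕ, 1 ≤ i →
      ((A.map (Int.cast : ℤ → ℝ))⁻¹ ^ i) *ᵥ v
        = α i • v + β i • ((A.map (Int.cast : ℤ → ℝ)) *ᵥ v))
    (hb : b < 0) (hb3 : (3 : ℤ) ∣ b) (hble : b ≤ -3) (hc : 3 * c = b ^ 2) :
    HasSum (fun i : ℕ => |α (i + 1)|)
      (((3 * |b| ^ 5 + 6 * b ^ 4 + 9 * |b| ^ 3 + 9 * b ^ 2 + 27 : ℤ) : ℝ) /
        ((b ^ 6 - 27 : ℤ) : ℝ)) := by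
  clear hexp hb3
  set M : Matrix (Fin 2) (Fin 2) ℝ := A.map (Int.cast : ℤ → ℝ) with hMdef
  set w : Fin 2 → ℝ := M *ᵥ v with hwdef
  -- real constants
  obtain ⟨n, hbn, hn3⟩ : ∃ n : ℝ, (b : ℝ) = -n ∧ (3 : ℝ) ≤ n := by
    refine ⟨-(b : ℝ), by ring, ?_⟩
    have : (b : ℝ) ≤ -3 := by exact_mod_cast hble
    linarith
  have hn0 : n ≠ 0 := by linarith
  have hnpos : (0 : ℝ) < n := by linarith
  have hcR : (c : ℝ) = n ^ 2 / 3 := by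
    have h3 : (3 : ℝ) * (c : ℝ) = (b : ℝ) ^ 2 := by exact_mod_cast hc
    have : (b : ℝ) ^ 2 = n ^ 2 := by rw [hbn]; ring
    linarith
  have hcpos : (0 : ℝ) < (c : ℝ) := by
    rw [hcR]; nlinarith
  have hc0 : (c : ℝ) ≠ 0 := ne_of_gt hcpos
  -- Cayley-Hamilton over ℤ
  have hZ : A * A + b • A + c • (1 : Matrix (Fin 2) (Fin 2) ℤ) = 0 := by
    have h := Matrix.aeval_self_charpoly A
    rw [hchar] at h
    simpa [pow_two, zsmul_eq_mul, mul_comm] using h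
  -- Cayley-Hamilton over ℝ
  have hCH : M * M + (b : ℝ) • M + (c : ℝ) • (1 : Matrix (Fin 2) (Fin 2) ℝ) = 0 := by
    ext i j
    have h := Matrix.ext_iff.2 hZ i j
    simp only [Matrix.add_apply, Matrix.mul_apply, Matrix.smul_apply, Matrix.one_apply,
      Fin.sum_univ_two, Matrix.zero_apply, Matrix.map_apply, smul_eq_mul, hMdef] at h ⊢
    by_cases hij : i = j <;> simp [hij] at h ⊢ <;> exact_mod_cast h
  -- determinant
  have hdet : M.det = (c : ℝ) := by
    have h : A.det = c := by
      have h2 := Matrix.det_eq_sign_charpoly_coeff A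
      rw [hchar] at h2
      simpa using h2
    rw [Matrix.det_fin_two] at h ⊢
    simp only [hMdef, Matrix.map_apply]
    exact_mod_cast h
  have hU : IsUnit M.det := by rw [hdet]; exact isUnit_iff_ne_zero.2 hc0
  have hinv : ∀ x : Fin 2 → ℝ, M⁻¹ *ᵥ (M *ᵥ x) = x := by
    intro x
    rw [Matrix.mulVec_mulVec, Matrix.nonsing_inv_mul M hU, Matrix.one_mulVec]
  have hinvw : M⁻¹ *ᵥ w = v := hinv v
  -- M⁻¹ v
  have hMinv : M⁻¹ *ᵥ v = (-(b:ℝ)/(c:ℝ)) • v + (-1/(c:ℝ)) • w := by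
    have h0 : (M * M) *ᵥ v + (b:ℝ) • (M *ᵥ v) + (c:ℝ) • v = 0 := by
      have := congrArg (fun N => N *ᵥ v) hCH
      simpa [Matrix.add_mulVec, Matrix.smul_mulVec, Matrix.one_mulVec,
        Matrix.zero_mulVec] using this
    have hMM : (M * M) *ᵥ v = -((b:ℝ) • (M *ᵥ v) + (c:ℝ) • v) := by
      rw [add_assoc] at h0
      exact eq_neg_of_add_eq_zero_left h0
    have key : M *ᵥ ((-(b:ℝ)/(c:ℝ)) • v + (-1/(c:ℝ)) • w) = v := by
      rw [hwdef, Matrix.mulVec_add, Matrix.mulVec_smul, Matrix.mulVec_smul,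
        Matrix.mulVec_mulVec, hMM]
      match_scalars <;> field_simp <;> ring
    calc M⁻¹ *ᵥ v = M⁻¹ *ᵥ (M *ᵥ ((-(b:ℝ)/(c:ℝ)) • v + (-1/(c:ℝ)) • w)) := by rw [key]
    _ = _ := hinv _
  -- uniqueness of coordinates
  have huniq : ∀ x y : ℝ, x • v + y • w = 0 → x = 0 ∧ y = 0 := by
    intro x y hxy
    have h := Fintype.linearIndependent_iff.1 hv ![x, y] (by
      simpa [Fin.sum_univ_two] using hxy)
    exact ⟨h 0, h 1⟩
  have hcoord : ∀ x y x' y' : ℝ, x • v + y • w = x' • v + y' • w → x = x' ∧ y = y' := by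
    intro x y x' y' hxy
    have h0 : (x - x') • v + (y - y') • w = 0 := by
      calc (x - x') • v + (y - y') • w = (x • v + y • w) - (x' • v + y' • w) := by module
      _ = 0 := sub_eq_zero.2 hxy
    obtain ⟨h1, h2⟩ := huniq _ _ h0
    exact ⟨by linarith, by linarith⟩
  -- base case values
  have hbase : α 1 = -(b:ℝ)/(c:ℝ) ∧ β 1 = -1/(c:ℝ) := by
    have h := hαβ 1 le_rfl
    rw [pow_one, hMinv] at h
    exact (hcoord _ _ _ _ h.symm)
  -- recurrence
  have hrec : ∀ i : ℕ, 1 ≤ i →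
      α (i+1) = α i * (-(b:ℝ)/(c:ℝ)) + β i ∧ β (i+1) = α i * (-1/(c:ℝ)) := by
    intro i hi
    have h1 := hαβ i hi
    have h2 := hαβ (i+1) (by omega)
    have e : (M⁻¹ ^ (i+1)) *ᵥ v = M⁻¹ *ᵥ ((M⁻¹ ^ i) *ᵥ v) := by
      rw [pow_succ', ← Matrix.mulVec_mulVec]
    rw [h1, h2, Matrix.mulVec_add, Matrix.mulVec_smul, Matrix.mulVec_smul, hMinv, hinvw] at e
    have e' : α (i+1) • v + β (i+1) • w
        = (α i * (-(b:ℝ)/(c:ℝ)) + β i) • v + (α i * (-1/(c:ℝ))) • w := by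
      rw [e]; module
    exact hcoord _ _ _ _ e'
  -- convert constants
  have e1 : -(b:ℝ)/(c:ℝ) = 3/n := by
    rw [hcR, hbn]; field_simp
  have e2 : -1/(c:ℝ) = -(3/n^2) := by
    rw [hcR]; field_simp
  have a1 : α 1 = 3/n := by rw [hbase.1, e1]
  have hβ1 : β 1 = -(3/n^2) := by rw [hbase.2, e2]
  have arec : ∀ i : ℕ, 1 ≤ i → α (i+2) = 3/n * α (i+1) - 3/n^2 * α i := by
    intro i hi
    have h1 := (hrec (i+1) (by omega)).1
    have h2 := (hrec i hi).2
    rw [show i+1+1 = i+2 from rfl] at h1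
    rw [h1, h2, e1, e2]
    ring
  have a2 : α 2 = 6/n^2 := by
    have h := (hrec 1 le_rfl).1
    rw [a1, hβ1, e1] at h
    rw [h]; field_simp; ring
  -- explicit values α 3 .. α 14
  have a3 : α 3 = 9/n^3 := by
    have h := arec 1 le_rfl; norm_num at h; rw [a1, a2] at h; rw [h]; field_simp; ring
  have a4 : α 4 = 9/n^4 := by
    have h := arec 2 (by norm_num); norm_num at h; rw [a2, a3] at h; rw [h]; field_simp; ring
  have a5 : α 5 = 0 := by
    have h := arec 3 (by norm_num); norm_num at h; rw [a3, a4] at h; rw [h]; field_simp; ring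
  have a6 : α 6 = -(27/n^6) := by
    have h := arec 4 (by norm_num); norm_num at h; rw [a4, a5] at h; rw [h]; field_simp; ring
  have a7 : α 7 = -(81/n^7) := by
    have h := arec 5 (by norm_num); norm_num at h; rw [a5, a6] at h; rw [h]; field_simp; ring
  have a8 : α 8 = -(162/n^8) := by
    have h := arec 6 (by norm_num); norm_num at h; rw [a6, a7] at h; rw [h]; field_simp; ring
  have a9 : α 9 = -(243/n^9) := by
    have h := arec 7 (by norm_num); norm_num at h; rw [a7, a8] at h; rw [h]; field_simp; ring
  have a10 : α 10 = -(243/n^10) := by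
    have h := arec 8 (by norm_num); norm_num at h; rw [a8, a9] at h; rw [h]; field_simp; ring
  have a11 : α 11 = 0 := by
    have h := arec 9 (by norm_num); norm_num at h; rw [a9, a10] at h; rw [h]; field_simp; ring
  have a12 : α 12 = 729/n^12 := by
    have h := arec 10 (by norm_num); norm_num at h; rw [a10, a11] at h; rw [h]; field_simp; ring
  have a13 : α 13 = 2187/n^13 := by
    have h := arec 11 (by norm_num); norm_num at h; rw [a11, a12] at h; rw [h]; field_simp; ring
  have a14 : α 14 = 4374/n^14 := by
    have h := arec 12 (by norm_num); norm_num at h; rw [a12, a13] at h; rw [h]; field_simp; ring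
  -- scaling
  obtain ⟨t, htdef⟩ : ∃ t : ℝ, t = 729 / n^12 := ⟨_, rfl⟩
  have htpos : 0 < t := by rw [htdef]; positivity
  have hn12 : (729 : ℝ) < n^12 := by
    calc (729 : ℝ) < 3^12 := by norm_num
    _ ≤ n^12 := by exact pow_le_pow_left₀ (by norm_num) hn3 12
  have ht1 : t < 1 := by
    rw [htdef, div_lt_one (by positivity)]; exact hn12
  have hscale : ∀ i : ℕ, 1 ≤ i → α (i+12) = t * α i ∧ α (i+13) = t * α (i+1) := by
    intro i hi
    induction i, hi using Nat.le_induction with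
    | base =>
      refine ⟨?_, ?_⟩
      · show α 13 = t * α 1
        rw [a13, a1, htdef]; field_simp; ring
      · show α 14 = t * α 2
        rw [a14, a2, htdef]; field_simp; ring
    | succ i hi ih =>
      refine ⟨ih.2, ?_⟩
      have h1 := arec (i+12) (by omega)
      rw [show i+12+2 = i+1+13 from by omega, show i+12+1 = i+13 from by omega] at h1
      rw [h1, ih.1, ih.2, show i+1+1 = i+2 from rfl, arec i hi]
      ring
  -- f and its periodicity
  set f : ℕ → ℝ := fun i => |α (i + 1)| with hfdef
  have hper : ∀ i : ℕ, f (i + 12) = t * f i := by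
    intro i
    have h := (hscale (i+1) (by omega)).1
    show |α (i + 12 + 1)| = t * f i
    rw [show i + 12 + 1 = i + 1 + 12 from by omega, h, abs_mul, abs_of_pos htpos]
  have hfq : ∀ j q : ℕ, f (12 * q + j) = t ^ q * f j := by
    intro j q
    induction q with
    | zero => simp
    | succ q ih =>
      have : 12 * (q + 1) + j = (12 * q + j) + 12 := by ring
      rw [this, hper, ih]; ring
  -- geometric sums on residue classes
  have hFj : ∀ j : ℕ, j < 12 →
      HasSum (fun i => if i % 12 = j then f i else 0) (f j * (1 - t)⁻¹) := by
    intro j hj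
    have hinj : Function.Injective (fun q : ℕ => 12 * q + j) := by
      intro q q' h
      have h' : 12 * q + j = 12 * q' + j := h
      omega
    have hvan : ∀ x : ℕ, x ∉ Set.range (fun q : ℕ => 12 * q + j) →
        (if x % 12 = j then f x else 0) = 0 := by
      intro x hx
      rw [if_neg]
      intro hmod
      exact hx ⟨x / 12, show 12 * (x / 12) + j = x by omega⟩
    rw [← Function.Injective.hasSum_iff hinj hvan]
    have hcomp : ((fun i => if i % 12 = j then f i else 0) ∘ (fun q : ℕ => 12 * q + j))
        = fun q => f j * t ^ q := by
      funext q
      simp only [Function.comp_apply]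
      rw [if_pos (by omega), hfq j q, mul_comm]
    rw [hcomp]
    exact (hasSum_geometric_of_lt_one (le_of_lt htpos) ht1).mul_left _
  -- combine
  have hsum : HasSum f (∑ j ∈ Finset.range 12, f j * (1 - t)⁻¹) := by
    have h := hasSum_sum (f := fun j (i : ℕ) => if i % 12 = j then f i else 0)
      (a := fun j => f j * (1 - t)⁻¹) (s := Finset.range 12)
      (fun j hj => hFj j (Finset.mem_range.1 hj))
    convert h using 1
    funext i
    rw [Finset.sum_ite_eq (Finset.range 12) (i % 12) (fun _ => f i)]
    rw [if_pos (Finset.mem_range.2 (Nat.mod_lt _ (by norm_num)))]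
  -- compute the value
  have hval : (∑ j ∈ Finset.range 12, f j * (1 - t)⁻¹)
      = ((3 * |b| ^ 5 + 6 * b ^ 4 + 9 * |b| ^ 3 + 9 * b ^ 2 + 27 : ℤ) : ℝ) /
        ((b ^ 6 - 27 : ℤ) : ℝ) := by
    have f0 : f 0 = 3/n := by
      have e : f 0 = |α 1| := by simp [hfdef]
      rw [e, a1, abs_of_pos (by positivity)]
    have f1 : f 1 = 6/n^2 := by
      have e : f 1 = |α 2| := by simp [hfdef]
      rw [e, a2, abs_of_pos (by positivity)]
    have f2 : f 2 = 9/n^3 := by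
      have e : f 2 = |α 3| := by simp [hfdef]
      rw [e, a3, abs_of_pos (by positivity)]
    have f3 : f 3 = 9/n^4 := by
      have e : f 3 = |α 4| := by simp [hfdef]
      rw [e, a4, abs_of_pos (by positivity)]
    have f4 : f 4 = 0 := by
      have e : f 4 = |α 5| := by simp [hfdef]
      rw [e, a5, abs_zero]
    have f5 : f 5 = 27/n^6 := by
      have e : f 5 = |α 6| := by simp [hfdef]
      rw [e, a6, abs_neg, abs_of_pos (by positivity)]
    have f6 : f 6 = 81/n^7 := by
      have e : f 6 = |α 7| := by simp [hfdef]
      rw [e, a7, abs_neg, abs_of_pos (by positivity)]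
    have f7 : f 7 = 162/n^8 := by
      have e : f 7 = |α 8| := by simp [hfdef]
      rw [e, a8, abs_neg, abs_of_pos (by positivity)]
    have f8 : f 8 = 243/n^9 := by
      have e : f 8 = |α 9| := by simp [hfdef]
      rw [e, a9, abs_neg, abs_of_pos (by positivity)]
    have f9 : f 9 = 243/n^10 := by
      have e : f 9 = |α 10| := by simp [hfdef]
      rw [e, a10, abs_neg, abs_of_pos (by positivity)]
    have f10 : f 10 = 0 := by
      have e : f 10 = |α 11| := by simp [hfdef]
      rw [e, a11, abs_zero]
    have f11 : f 11 = 729/n^12 := by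
      have e : f 11 = |α 12| := by simp [hfdef]
      rw [e, a12, abs_of_pos (by positivity)]
    have hcast : ((3 * |b| ^ 5 + 6 * b ^ 4 + 9 * |b| ^ 3 + 9 * b ^ 2 + 27 : ℤ) : ℝ)
        = 3 * n^5 + 6 * n^4 + 9 * n^3 + 9 * n^2 + 27 := by
      push_cast
      rw [abs_of_neg (show (b:ℝ) < 0 by exact_mod_cast hb)]
      rw [hbn]; ring
    have hcast2 : ((b ^ 6 - 27 : ℤ) : ℝ) = n^6 - 27 := by
      push_cast; rw [hbn]; ring
    rw [hcast, hcast2]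
    rw [Finset.sum_range_succ, Finset.sum_range_succ, Finset.sum_range_succ,
      Finset.sum_range_succ, Finset.sum_range_succ, Finset.sum_range_succ,
      Finset.sum_range_succ, Finset.sum_range_succ, Finset.sum_range_succ,
      Finset.sum_range_succ, Finset.sum_range_succ, Finset.sum_range_succ,
      Finset.sum_range_zero]
    rw [f0, f1, f2, f3, f4, f5, f6, f7, f8, f9, f10, f11, htdef]
    have h12 : n^12 - 729 ≠ 0 := by linarith
    have h6 : n^6 - 27 ≠ 0 := by
      have : (27 : ℝ) < n^6 := by
        calc (27:ℝ) < 3^6 := by norm_num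
        _ ≤ n^6 := by exact pow_le_pow_left₀ (by norm_num) hn3 6
      linarith
    have hu : ((1 : ℝ) - 729/n^12)⁻¹ = n^12/(n^12 - 729) := by
      rw [show (1:ℝ) - 729/n^12 = (n^12 - 729)/n^12 by field_simp, inv_div]
    rw [hu]
    field_simp
    ring
  rw [← hval]
  exact hsum
end
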